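/- arXiv:2311.13365 — 7 statements merged into one kernel-verified Lean document; each statement's English description precedes it below -/
import Mathlib

section
/- There exists a constant c_T > 0 depending only on T > 0 such that for all real a, b (not both zero), κ(T,b) := tanh(T·√(a²+b²)) / (√(a²+b²) - a·tanh(T·√(a²+b²))) satisfies κ(T,b) > c_T / (1 + |a| + |b|). -/
/-!
The denominator satisfies `0 < r - a t < 2r` for `r = √(a² + b²) ≥ |a|` and `t = tanh (T r) ∈ (0, 1)`,
so `κ > t / (2r)`. Since `sinh x ≥ x` and `cosh` is increasing on `[0, ∞)`, `tanh x ≥ x / cosh T` for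
`0 ≤ x ≤ T`; applied at `x = T min(r, 1)` this gives `t / r ≥ (T / cosh T) / (1 + r)`, and
`r ≤ |a| + |b|` yields the bound with `c_T = T / (2 cosh T)`.
-/

open Real

namespace Real

theorem tanh_le_tanh {x y : ℝ} (h : x ≤ y) : tanh x ≤ tanh y := by
  rwa [← artanh_le_artanh_iff ⟨neg_one_lt_tanh x, tanh_lt_one x⟩
    ⟨neg_one_lt_tanh y, tanh_lt_one y⟩, artanh_tanh, artanh_tanh]

theorem tanh_pos {x : ℝ} (hx : 0 < x) : 0 < tanh x := by
  rw [tanh_eq_sinh_div_cosh]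
  exact div_pos (sinh_pos_iff.2 hx) (cosh_pos x)

theorem div_cosh_le_tanh {x y : ℝ} (hx : 0 ≤ x) (hxy : x ≤ y) : x / cosh y ≤ tanh x :=
  calc x / cosh y ≤ x / cosh x :=
        div_le_div_of_nonneg_left hx (cosh_pos x) (cosh_le_cosh.2 (by
          rwa [abs_of_nonneg hx, abs_of_nonneg (hx.trans hxy)]))
    _ ≤ sinh x / cosh x := by gcongr; exact self_le_sinh_iff.2 hx
    _ = tanh x := (tanh_eq_sinh_div_cosh x).symm

theorem div_cosh_mul_min_le_tanh_mul {T r : ℝ} (hT : 0 ≤ T) (hr : 0 ≤ r) :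
    T / cosh T * min r 1 ≤ tanh (T * r) := by
  have hmin : T * min r 1 ≤ T := mul_le_of_le_one_right hT (min_le_right r 1)
  calc T / cosh T * min r 1 = T * min r 1 / cosh T := by ring
    _ ≤ tanh (T * min r 1) := div_cosh_le_tanh (by positivity) hmin
    _ ≤ tanh (T * r) := tanh_le_tanh (mul_le_mul_of_nonneg_left (min_le_left r 1) hT)

theorem div_cosh_div_one_add_le_tanh_mul_div {T r : ℝ} (hT : 0 ≤ T) (hr : 0 < r) :
    T / cosh T / (1 + r) ≤ tanh (T * r) / r := by
  have hmin : r / (1 + r) ≤ min r 1 := by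
    rw [div_le_iff₀ (by positivity)]
    rcases le_total r 1 with h | h
    · rw [min_eq_left h]; nlinarith
    · rw [min_eq_right h]; linarith
  calc T / cosh T / (1 + r) = T / cosh T * (r / (1 + r)) / r := by field_simp
    _ ≤ T / cosh T * min r 1 / r := by gcongr
    _ ≤ tanh (T * r) / r := by gcongr; exact div_cosh_mul_min_le_tanh_mul hT hr.le

end Real

theorem riccati_kappa_lower_bound (T : ℝ) (hT : 0 < T) :
    ∃ c : ℝ, 0 < c ∧ ∀ a b : ℝ, ¬(a = 0 ∧ b = 0) →
      Real.tanh (T * Real.sqrt (a ^ 2 + b ^ 2)) /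
          (Real.sqrt (a ^ 2 + b ^ 2) - a * Real.tanh (T * Real.sqrt (a ^ 2 + b ^ 2)))
        > c / (1 + |a| + |b|) := by
  refine ⟨T / cosh T / 2, by positivity, fun a b hab => ?_⟩
  have hr : 0 < √(a ^ 2 + b ^ 2) := by
    rcases not_and_or.1 hab with h | h <;> positivity
  set r := √(a ^ 2 + b ^ 2)
  set t := tanh (T * r)
  have ht : 0 < t := tanh_pos (by positivity)
  have har : |a| ≤ r := abs_le_sqrt (by nlinarith)
  have hrab : r ≤ |a| + |b| := by
    rw [sqrt_le_left (by positivity)]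
    nlinarith [sq_abs a, sq_abs b, abs_nonneg a, abs_nonneg b]
  have hat : |a * t| < r := by
    rw [abs_mul]
    calc |a| * |t| ≤ r * |t| := by gcongr
      _ < r := mul_lt_of_lt_one_right hr (abs_tanh_lt_one _)
  obtain ⟨hden_pos, hden_lt⟩ := abs_lt.1 hat
  calc T / cosh T / 2 / (1 + |a| + |b|) = T / cosh T / (1 + |a| + |b|) / 2 := div_right_comm ..
    _ ≤ T / cosh T / (1 + r) / 2 := by gcongr T / cosh T / ?_ / 2; linarith
    _ ≤ t / r / 2 := by gcongr ?_ / 2; exact div_cosh_div_one_add_le_tanh_mul_div hT.le hr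
    _ = t / (2 * r) := by ring
    _ < t / (r - a * t) := div_lt_div_of_pos_left ht (by linarith) (by linarith)
end

section
/- Let T > 0 be fixed. There exists a constant c_T > 0 such that for all a ≥ 1 and all b with |b| ≥ a, κ(T,b) := tanh(T·√(a²+b²)) / (√(a²+b²) - a·tanh(T·√(a²+b²))) ≥ c_T / |b|. -/
/-!
With `r = √(a² + b²)` we have `√2 ≤ r ≤ √2 |b|` and `a < r`. Since `0 < tanh ≤ 1`, the denominator
`r - a tanh(T r)` lies in `(0, r]`, and `tanh` is increasing, so
`κ ≥ tanh(T r) / r ≥ tanh(T √2) / (√2 |b|)`.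
-/

open Real

theorem Real.strictMono_tanh : StrictMono tanh := fun x y hxy =>
  (artanh_lt_artanh_iff ⟨neg_one_lt_tanh x, tanh_lt_one x⟩ ⟨neg_one_lt_tanh y, tanh_lt_one y⟩).1
    (by rwa [artanh_tanh, artanh_tanh])

theorem Real.tanh_pos_s3 {x : ℝ} (hx : 0 < x) : 0 < tanh x := by
  simpa using strictMono_tanh hx

theorem Real.sqrt_sq_add_sq_le_sqrt_two_mul_abs {a b : ℝ} (hab : |a| ≤ |b|) :
    √(a ^ 2 + b ^ 2) ≤ √2 * |b| := by
  rw [← sqrt_sq_eq_abs b, ← sqrt_mul zero_le_two]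
  gcongr
  nlinarith [sq_abs a, sq_abs b, abs_nonneg a]

theorem Real.lt_sqrt_sq_add_sq {a b : ℝ} (hb : b ≠ 0) : a < √(a ^ 2 + b ^ 2) := by
  refine (le_abs_self a).trans_lt ?_
  rw [← sqrt_sq_eq_abs]
  exact sqrt_lt_sqrt (sq_nonneg a) (lt_add_of_pos_right _ (by positivity))

theorem div_le_div_sub_mul {t₀ t a r : ℝ} (ht₀ : 0 ≤ t₀) (ht₀t : t₀ ≤ t) (ht : t ≤ 1)
    (ha : 0 ≤ a) (har : a < r) : t₀ / r ≤ t / (r - a * t) :=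
  div_le_div₀ (ht₀.trans ht₀t) ht₀t (by nlinarith) (by nlinarith)

theorem riccati_kappa_lower_bound_large_b (T : ℝ) (hT : 0 < T) :
    ∃ c : ℝ, 0 < c ∧ ∀ a b : ℝ, 1 ≤ a → a ≤ |b| →
      Real.tanh (T * Real.sqrt (a ^ 2 + b ^ 2)) /
          (Real.sqrt (a ^ 2 + b ^ 2) - a * Real.tanh (T * Real.sqrt (a ^ 2 + b ^ 2)))
        ≥ c / |b| := by
  refine ⟨tanh (T * √2) / √2, by positivity [tanh_pos_s3 (by positivity : 0 < T * √2)], ?_⟩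
  intro a b ha hab
  have hb : 1 ≤ |b| := ha.trans hab
  have hr : √2 ≤ √(a ^ 2 + b ^ 2) := by
    gcongr
    nlinarith [sq_abs b]
  calc tanh (T * √2) / √2 / |b|
      = tanh (T * √2) / (√2 * |b|) := div_div _ _ _
    _ ≤ tanh (T * √2) / √(a ^ 2 + b ^ 2) := by
        gcongr
        · exact (tanh_pos_s3 (by positivity)).le
        · exact sqrt_sq_add_sq_le_sqrt_two_mul_abs (by rwa [abs_of_nonneg (by linarith)])
    _ ≤ _ := div_le_div_sub_mul (tanh_pos_s3 (by positivity)).le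
        (strictMono_tanh.monotone (by gcongr)) (tanh_lt_one _).le (by linarith)
        (lt_sqrt_sq_add_sq (abs_pos.1 (by linarith)))
end

section
/- Let T > 0 be fixed. There exists a constant c_T > 0 such that for all a ≥ 1 and all b with a·e^{-aT} ≤ |b| ≤ a, one has tanh(T·√(a²+b²)) / (√(a²+b²) - a·tanh(T·√(a²+b²))) ≥ c_T · a / b². -/
lemma tanh_formula2 (x : ℝ) : Real.tanh x = 1 - 2 / (Real.exp (2*x) + 1) := by
  rw [Real.tanh_eq_sinh_div_cosh, Real.sinh_eq, Real.cosh_eq]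
  have h1 : Real.exp x * Real.exp x = Real.exp (2*x) := by rw [← Real.exp_add]; ring_nf
  have h2 : Real.exp x * Real.exp (-x) = 1 := by rw [← Real.exp_add]; simp
  have p1 := Real.exp_pos x
  have p2 := Real.exp_pos (-x)
  have p3 := Real.exp_pos (2*x)
  field_simp
  rw [mul_comm x 2, ← h1]
  nlinarith [mul_pos p1 p2, congrArg (· * Real.exp x) h2]

lemma tanh_lb' (x : ℝ) : 1 - Real.tanh x ≤ 2 * Real.exp (-(2*x)) := by
  rw [tanh_formula2]
  have h1 : Real.exp (-(2*x)) * Real.exp (2*x) = 1 := by rw [← Real.exp_add]; simp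
  have p3 := Real.exp_pos (2*x)
  have p4 := Real.exp_pos (-(2*x))
  have : 1 - (1 - 2 / (Real.exp (2*x) + 1)) = 2 / (Real.exp (2*x) + 1) := by ring
  rw [this, div_le_iff₀ (by positivity)]
  nlinarith

lemma tanh_mono' {x y : ℝ} (h : x ≤ y) : Real.tanh x ≤ Real.tanh y := by
  rw [tanh_formula2, tanh_formula2]
  have p1 := Real.exp_pos (2*x)
  have p2 := Real.exp_pos (2*y)
  have h3 : Real.exp (2*x) ≤ Real.exp (2*y) := Real.exp_le_exp.2 (by linarith)
  have : 2 / (Real.exp (2*y) + 1) ≤ 2 / (Real.exp (2*x) + 1) :=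
    div_le_div_of_nonneg_left (by norm_num) (by positivity) (by linarith)
  linarith

lemma tanh_lt_one' (x : ℝ) : Real.tanh x < 1 := by
  rw [tanh_formula2]
  have p1 := Real.exp_pos (2*x)
  have : 0 < 2 / (Real.exp (2*x) + 1) := by positivity
  linarith

lemma tanh_pos' {x : ℝ} (h : 0 < x) : 0 < Real.tanh x := by
  rw [tanh_formula2]
  have h1 : 1 < Real.exp (2*x) := Real.one_lt_exp_iff.2 (by linarith)
  have : 2 / (Real.exp (2*x) + 1) < 1 := by
    rw [div_lt_one (by linarith)]; linarith
  linarith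

theorem riccati_kappa_lower_bound_mid_b (T : ℝ) (hT : 0 < T) :
    ∃ c : ℝ, 0 < c ∧ ∀ a b : ℝ, 1 ≤ a → a * Real.exp (-(a * T)) ≤ |b| → |b| ≤ a →
      Real.tanh (T * Real.sqrt (a ^ 2 + b ^ 2)) /
          (Real.sqrt (a ^ 2 + b ^ 2) - a * Real.tanh (T * Real.sqrt (a ^ 2 + b ^ 2)))
        ≥ c * a / b ^ 2 := by
  have htT : 0 < Real.tanh T := tanh_pos' hT
  refine ⟨2 * Real.tanh T / 5, by positivity, ?_⟩
  intro a b ha hlb hub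
  have ha0 : (0:ℝ) < a := lt_of_lt_of_le one_pos ha
  have hb0 : 0 < |b| := lt_of_lt_of_le (by positivity) hlb
  have hb2 : 0 < b ^ 2 := by
    have := sq_abs b
    nlinarith
  set s := Real.sqrt (a ^ 2 + b ^ 2) with hs
  have hs_sq : s ^ 2 = a ^ 2 + b ^ 2 := Real.sq_sqrt (by positivity)
  have hsa : a ≤ s := by
    rw [hs]
    exact (Real.le_sqrt ha0.le (by positivity)).2 (by nlinarith)
  have hs1 : 1 ≤ s := le_trans ha hsa
  set t := Real.tanh (T * s) with ht
  have ht1 : t < 1 := tanh_lt_one' _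
  have htpos : Real.tanh T ≤ t := tanh_mono' (by nlinarith)
  have hD : 0 < s - a * t := by nlinarith
  have h1 : (s - a) * (2 * a) ≤ b ^ 2 := by nlinarith
  have h2 : 1 - t ≤ 2 * Real.exp (-(2 * (T * s))) := tanh_lb' (T * s)
  have h3 : Real.exp (-(2 * (T * s))) ≤ Real.exp (-(a * T)) ^ 2 := by
    rw [← Real.exp_nat_mul]
    push_cast
    apply Real.exp_le_exp.2
    nlinarith
  have h4 : a ^ 2 * Real.exp (-(a*T)) ^ 2 ≤ b ^ 2 := by
    have := mul_le_mul hlb hlb (by positivity) (abs_nonneg b)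
    calc a ^ 2 * Real.exp (-(a*T)) ^ 2 = (a * Real.exp (-(a*T))) * (a * Real.exp (-(a*T))) := by ring
      _ ≤ |b| * |b| := this
      _ = b ^ 2 := by rw [← sq_abs]; ring
  have hDb : (s - a * t) * a ≤ (5/2) * b ^ 2 := by
    have e1 : a * (1 - t) * a ≤ 2 * b ^ 2 := by nlinarith [Real.exp_pos (-(2*(T*s))), Real.exp_pos (-(a*T))]
    nlinarith
  rw [ge_iff_le, div_le_div_iff₀ (by positivity) hD]
  nlinarith [mul_le_mul_of_nonneg_left hDb htT.le, mul_le_mul_of_nonneg_right htpos hD.le]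
end

section
/- Let T > 0 be fixed. There exists a constant c_T > 0 such that for all a ≤ 1 and all b ∈ ℝ with (a,b) ≠ (0,0), one has tanh(T·√(a²+b²)) / (√(a²+b²) - a·tanh(T·√(a²+b²))) ≥ c_T / (1 + |a| + |b|). -/
/-!
Write `r = √(a² + b²)` and `t = tanh (T r)`. From `exp (2x) ≥ 1 + 2x` one gets
`tanh x ≥ x / (1 + x)` for `x ≥ 0`, and since `|a| ≤ r` the denominator satisfies
`0 < r - a t ≤ 2 r`. Hence the quotient is at least `T / (2 (1 + T r))`, and `r ≤ |a| + |b|`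
turns this into the bound with `c = T / (2 (1 + T))`.
-/

open Real

lemma Real.div_one_add_le_tanh {x : ℝ} (hx : 0 ≤ x) : x / (1 + x) ≤ tanh x := by
  have hexp : 2 * x + 1 ≤ exp x * exp x := by
    rw [← exp_add, ← two_mul]
    exact add_one_le_exp (2 * x)
  have hinv : exp x * exp (-x) = 1 := by rw [← exp_add, add_neg_cancel, exp_zero]
  have hcross : (exp x - exp (-x)) * (1 + x) - x * (exp x + exp (-x)) =
      exp (-x) * (exp x * exp x - (2 * x + 1)) := by
    linear_combination (-exp x) * hinv
  rw [tanh_eq, div_le_div_iff₀ (by positivity) (by positivity), ← sub_nonneg, hcross]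
  exact mul_nonneg (exp_pos (-x)).le (sub_nonneg.2 hexp)

lemma Real.tanh_nonneg {x : ℝ} (hx : 0 ≤ x) : 0 ≤ tanh x :=
  (div_nonneg hx (by positivity)).trans (div_one_add_le_tanh hx)

lemma div_two_mul_one_add_le_tanh_div {T r a : ℝ} (hT : 0 ≤ T) (hr : 0 < r) (ha : |a| ≤ r) :
    T / (2 * (1 + T * r)) ≤ tanh (T * r) / (r - a * tanh (T * r)) := by
  set t := tanh (T * r)
  have ht0 : 0 ≤ t := tanh_nonneg (by positivity)
  have ht1 : t < 1 := tanh_lt_one _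
  have hat : |a * t| ≤ r * t := by
    rw [abs_mul, abs_of_nonneg ht0]
    exact mul_le_mul_of_nonneg_right ha ht0
  have hden_pos : 0 < r - a * t := by nlinarith [le_abs_self (a * t)]
  have hden_le : r - a * t ≤ 2 * r := by nlinarith [neg_abs_le (a * t)]
  calc T / (2 * (1 + T * r)) = T * r / (1 + T * r) / (2 * r) := by
        field_simp
    _ ≤ t / (2 * r) := by gcongr; exact div_one_add_le_tanh (by positivity)
    _ ≤ t / (r - a * t) := div_le_div_of_nonneg_left ht0 hden_pos hden_le

lemma sqrt_sq_add_sq_le_abs_add_abs (a b : ℝ) : √(a ^ 2 + b ^ 2) ≤ |a| + |b| := by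
  rw [sqrt_le_left (by positivity)]
  nlinarith [sq_abs a, sq_abs b, abs_nonneg a, abs_nonneg b]

theorem riccati_kappa_lower_bound_a_le_one (T : ℝ) (hT : 0 < T) :
    ∃ c : ℝ, 0 < c ∧ ∀ a b : ℝ, a ≤ 1 → ¬(a = 0 ∧ b = 0) →
      Real.tanh (T * Real.sqrt (a ^ 2 + b ^ 2)) /
          (Real.sqrt (a ^ 2 + b ^ 2) - a * Real.tanh (T * Real.sqrt (a ^ 2 + b ^ 2)))
        ≥ c / (1 + |a| + |b|) := by
  refine ⟨T / (2 * (1 + T)), by positivity, fun a b _ hab => ?_⟩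
  have hr : 0 < √(a ^ 2 + b ^ 2) := by
    rcases not_and_or.1 hab with h | h <;> positivity
  have har : |a| ≤ √(a ^ 2 + b ^ 2) := abs_le_sqrt (by nlinarith [sq_nonneg b])
  have hrab := sqrt_sq_add_sq_le_abs_add_abs a b
  calc T / (2 * (1 + T)) / (1 + |a| + |b|)
        = T / (2 * ((1 + T) * (1 + |a| + |b|))) := by rw [div_div, mul_assoc]
    _ ≤ T / (2 * (1 + T * √(a ^ 2 + b ^ 2))) := by
        gcongr
        nlinarith [abs_nonneg a, abs_nonneg b]
    _ ≤ _ := div_two_mul_one_add_le_tanh_div hT.le hr har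
end

section
/- Let Q₀ > 0, α > 0, and let q solve dq(t) = αq(t)dt + dW(t), q(0) = Q₀, with W standard Brownian motion. Then there exist absolute constants C, c > 0 such that Prob[∃ t ≥ 0 : q(t) ≤ Q₀/2] ≤ C·exp(−c·Q₀²·α). -/
open MeasureTheory ProbabilityTheory

open Real Set Filter Topology
open scoped NNReal ENNReal

lemma exp_integral_Ioi (a : ℝ) {b : ℝ} (hb : 0 < b) :
    ∫ x in Ioi a, Real.exp (-(b * x)) = Real.exp (-(b * a)) / b := by
  have hderiv : ∀ x ∈ Ioi a, HasDerivAt (fun x => -Real.exp (-(b * x)) / b)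
      (Real.exp (-(b * x))) x := by
    intro x _
    have h1 : HasDerivAt (fun x : ℝ => -(b * x)) (-b) x := by
      simpa using ((hasDerivAt_id x).const_mul b).fun_neg
    have h2 := h1.exp
    have h3 := (h2.neg).div_const b
    have h4 : -(Real.exp (-(b * x)) * -b) / b = Real.exp (-(b * x)) := by
      rw [mul_neg, neg_neg, mul_div_assoc, div_self hb.ne', mul_one]
    rw [h4] at h3; exact h3
  have hint : IntegrableOn (fun x => Real.exp (-(b * x))) (Ioi a) := by
    simpa [neg_mul] using exp_neg_integrableOn_Ioi a hb
  have htend : Tendsto (fun x => -Real.exp (-(b * x)) / b) atTop (𝓝 0) := by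
    have : Tendsto (fun x : ℝ => b * x) atTop atTop :=
      Tendsto.const_mul_atTop hb tendsto_id
    have h := (Real.tendsto_exp_neg_atTop_nhds_zero.comp this).neg.div_const b
    simpa using h
  have hcont : ContinuousWithinAt (fun x => -Real.exp (-(b * x)) / b) (Ici a) a :=
    (Continuous.continuousWithinAt (by continuity))
  have := integral_Ioi_of_hasDerivAt_of_tendsto hcont hderiv hint htend
  rw [this]
  field_simp
  ring

lemma gaussian_tail_Ici {v : ℝ≥0} (hv : v ≠ 0) {y : ℝ} (hy : 0 ≤ y) :
    gaussianReal 0 v (Ici y) ≤ ENNReal.ofReal (3 * Real.exp (-y ^ 2 / (2 * v))) := by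
  have hV : (0:ℝ) < (v:ℝ) := by positivity
  by_cases hcase : y ^ 2 ≤ 2 * (v:ℝ)
  · calc gaussianReal 0 v (Ici y) ≤ 1 := prob_le_one
    _ ≤ ENNReal.ofReal (3 * Real.exp (-y ^ 2 / (2 * v))) := by
        rw [← ENNReal.ofReal_one]
        apply ENNReal.ofReal_le_ofReal
        have h1 : (-1:ℝ) ≤ -y ^ 2 / (2 * v) := by
          rw [neg_div, neg_le_neg_iff, div_le_one (by positivity)]
          exact hcase
        have h2 := Real.exp_le_exp.2 h1
        have h3 : (1:ℝ) ≤ 3 * Real.exp (-1) := by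
          rw [Real.exp_neg, ← div_eq_mul_inv, le_div_iff₀ (Real.exp_pos 1)]
          nlinarith [Real.exp_one_lt_d9]
        nlinarith [Real.exp_pos (-y^2/(2*(v:ℝ)))]
  · push_neg at hcase
    have hy0 : 0 < y := by
      rcases hy.lt_or_eq with h | h
      · exact h
      · exfalso; rw [← h] at hcase; nlinarith
    rw [gaussianReal_apply_eq_integral 0 hv]
    apply ENNReal.ofReal_le_ofReal
    set b : ℝ := y / (2 * v) with hb
    have hbpos : 0 < b := by positivity
    have hintexp : IntegrableOn (fun x => Real.exp (-(b * x))) (Ici y) := by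
      rw [integrableOn_Ici_iff_integrableOn_Ioi]
      simpa [neg_mul] using exp_neg_integrableOn_Ioi y hbpos
    have key : ∫ x in Ici y, gaussianPDFReal 0 v x
        ≤ ∫ x in Ici y, (Real.sqrt (2 * π * v))⁻¹ * Real.exp (-(b * x)) := by
      apply setIntegral_mono_on
      · exact (integrable_gaussianPDFReal 0 v).integrableOn
      · exact hintexp.const_mul _
      · exact measurableSet_Ici
      · intro x hx
        simp only [gaussianPDFReal, sub_zero]
        apply mul_le_mul_of_nonneg_left _ (by positivity)
        apply Real.exp_le_exp.2
        rw [hb, neg_div, div_mul_eq_mul_div, neg_le_neg_iff,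
          div_le_div_iff_of_pos_right (by positivity)]
        nlinarith [mem_Ici.1 hx]
    have hval : ∫ x in Ici y, (Real.sqrt (2 * π * v))⁻¹ * Real.exp (-(b * x))
        = (Real.sqrt (2 * π * v))⁻¹ * (Real.exp (-(b * y)) / b) := by
      rw [integral_Ici_eq_integral_Ioi, MeasureTheory.integral_const_mul,
        exp_integral_Ioi y hbpos]
    have hexp : -(b * y) = -y ^ 2 / (2 * v) := by
      rw [hb]; field_simp
    have hs : (0:ℝ) < Real.sqrt (2 * π * v) := by positivity
    have hsq : Real.sqrt (2 * v) ≤ y := by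
      rw [show y = Real.sqrt (y ^ 2) by rw [Real.sqrt_sq hy]]
      exact Real.sqrt_le_sqrt hcase.le
    have h2v : Real.sqrt (2 * v) * Real.sqrt (2 * π * v) = 2 * v * Real.sqrt π := by
      rw [← Real.sqrt_mul (by positivity)]
      rw [show (2:ℝ) * v * (2 * π * v) = (2 * v)^2 * π by ring]
      rw [Real.sqrt_mul (by positivity), Real.sqrt_sq (by positivity)]
    have hπ : (1:ℝ) ≤ Real.sqrt π := by
      rw [show (1:ℝ) = Real.sqrt 1 by simp]
      exact Real.sqrt_le_sqrt (by nlinarith [Real.pi_gt_three])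
    have hkey : 2 * (v:ℝ) ≤ y * Real.sqrt (2 * π * v) := by
      nlinarith [mul_le_mul_of_nonneg_right hsq hs.le, Real.sqrt_nonneg (2*(v:ℝ))]
    have hcoef : (1:ℝ) ≤ 3 * (b * Real.sqrt (2 * π * v)) := by
      have : (1:ℝ) ≤ b * Real.sqrt (2 * π * v) := by
        rw [hb, div_mul_eq_mul_div, le_div_iff₀ (by positivity)]
        nlinarith
      nlinarith
    calc ∫ x in Ici y, gaussianPDFReal 0 v x
        ≤ (Real.sqrt (2 * π * v))⁻¹ * (Real.exp (-(b * y)) / b) := key.trans hval.le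
      _ = Real.exp (-y ^ 2 / (2 * v)) / (b * Real.sqrt (2 * π * v)) := by
          rw [hexp]; field_simp
      _ ≤ 3 * Real.exp (-y ^ 2 / (2 * v)) := by
          rw [div_le_iff₀ (by positivity)]
          nlinarith [Real.exp_pos (-y^2/(2*(v:ℝ)))]

/-- A standard Brownian motion: starts at `0`, has continuous paths, and has
independent Gaussian increments with `W t - W s ∼ N(0, t - s)` for `0 ≤ s ≤ t`. -/
def IsStandardBrownianMotion {Ω : Type*} [MeasurableSpace Ω] (P : Measure Ω)
    (W : ℝ → Ω → ℝ) : Prop :=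
  (∀ ω, W 0 ω = 0) ∧
  (∀ ω, Continuous fun t => W t ω) ∧
  (∀ t, Measurable (W t)) ∧
  (∀ s t : ℝ, 0 ≤ s → s ≤ t →
    Measure.map (fun ω => W t ω - W s ω) P = gaussianReal 0 ((t - s).toNNReal)) ∧
  (∀ (n : ℕ) (ts : Fin (n + 1) → ℝ), Monotone ts → (∀ i, 0 ≤ ts i) →
    iIndepFun
      (fun (i : Fin n) ω => W (ts i.succ) ω - W (ts i.castSucc) ω) P)

lemma gaussian_tail_abs {v : ℝ≥0} (hv : v ≠ 0) {y : ℝ} (hy : 0 ≤ y) :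
    gaussianReal 0 v {z : ℝ | y ≤ |z|} ≤ ENNReal.ofReal (6 * Real.exp (-y ^ 2 / (2 * v))) := by
  have hsub : {z : ℝ | y ≤ |z|} ⊆ Iic (-y) ∪ Ici y := by
    intro z hz
    rcases abs_cases z with ⟨h, _⟩ | ⟨h, _⟩
    · right; simp only [mem_Ici]; rw [← h]; exact hz
    · left; simp only [mem_Iic]; simp only [mem_setOf_eq, h] at hz; linarith
  have hneg : gaussianReal 0 v (Iic (-y)) = gaussianReal 0 v (Ici y) := by
    have hmap := gaussianReal_map_const_mul (μ := 0) (v := v) (-1)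
    have hv' : (NNReal.mk ((-1:ℝ)^2) (sq_nonneg _) * v : ℝ≥0) = v := by
      ext; simp
    rw [hv'] at hmap
    simp only [mul_zero] at hmap
    have hmeas : Measurable (fun x : ℝ => -1 * x) := measurable_const.mul measurable_id
    calc gaussianReal 0 v (Iic (-y))
        = (Measure.map (fun x : ℝ => -1 * x) (gaussianReal 0 v)) (Iic (-y)) := by rw [hmap]
      _ = gaussianReal 0 v ((fun x : ℝ => -1 * x) ⁻¹' (Iic (-y))) :=
          Measure.map_apply hmeas measurableSet_Iic
      _ = gaussianReal 0 v (Ici y) := by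
          congr 1
          ext x
          simp only [mem_preimage, mem_Iic, mem_Ici]
          constructor <;> intro h <;> linarith
  calc gaussianReal 0 v {z : ℝ | y ≤ |z|}
      ≤ gaussianReal 0 v (Iic (-y) ∪ Ici y) := measure_mono hsub
    _ ≤ gaussianReal 0 v (Iic (-y)) + gaussianReal 0 v (Ici y) := measure_union_le _ _
    _ = gaussianReal 0 v (Ici y) + gaussianReal 0 v (Ici y) := by rw [hneg]
    _ ≤ ENNReal.ofReal (3 * Real.exp (-y ^ 2 / (2 * v)))
        + ENNReal.ofReal (3 * Real.exp (-y ^ 2 / (2 * v))) := by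
        exact add_le_add (gaussian_tail_Ici hv hy) (gaussian_tail_Ici hv hy)
    _ = ENNReal.ofReal (6 * Real.exp (-y ^ 2 / (2 * v))) := by
        rw [← ENNReal.ofReal_add (by positivity) (by positivity)]
        ring_nf

lemma increment_tail {Ω : Type*} [MeasurableSpace Ω] {P : Measure Ω}
    (W : ℝ → Ω → ℝ) (hW : IsStandardBrownianMotion P W)
    {s t y : ℝ} (hs : 0 ≤ s) (hst : s < t) (hy : 0 ≤ y) :
    P {ω | y ≤ |W t ω - W s ω|}
      ≤ ENNReal.ofReal (6 * Real.exp (-y ^ 2 / (2 * (t - s)))) := by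
  have hmeas : Measurable (fun ω => W t ω - W s ω) := (hW.2.2.1 t).sub (hW.2.2.1 s)
  have hset : MeasurableSet {z : ℝ | y ≤ |z|} :=
    measurableSet_le measurable_const measurable_abs
  have hmap := hW.2.2.2.1 s t hs hst.le
  have h1 : {ω | y ≤ |W t ω - W s ω|} = (fun ω => W t ω - W s ω) ⁻¹' {z : ℝ | y ≤ |z|} := rfl
  rw [h1, ← Measure.map_apply hmeas hset, hmap]
  have hvne : ((t - s).toNNReal) ≠ 0 := by
    simp only [ne_eq, Real.toNNReal_eq_zero, not_le]
    linarith
  have hvc : (((t - s).toNNReal : ℝ≥0) : ℝ) = t - s := Real.coe_toNNReal _ (by linarith)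
  calc gaussianReal 0 ((t - s).toNNReal) {z : ℝ | y ≤ |z|}
      ≤ ENNReal.ofReal (6 * Real.exp (-y ^ 2 / (2 * ((t - s).toNNReal : ℝ)))) :=
        gaussian_tail_abs hvne hy
    _ = ENNReal.ofReal (6 * Real.exp (-y ^ 2 / (2 * (t - s)))) := by rw [hvc]

lemma bm_sup_bound {Ω : Type*} [MeasurableSpace Ω] (P : Measure Ω) [IsProbabilityMeasure P]
    (W : ℝ → Ω → ℝ) (hW : IsStandardBrownianMotion P W) {T x : ℝ} (hT : 0 < T) (hx : 0 < x) :
    P {ω | ∃ t, 0 ≤ t ∧ t < T ∧ x ≤ |W t ω|}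
      ≤ ENNReal.ofReal (2 ^ 16 * Real.exp (-(x ^ 2) / (64 * T))) := by
  set y : ℝ := x ^ 2 / (64 * T) with hy_def
  have hy : 0 < y := by positivity
  have hnegy : -(x ^ 2) / (64 * T) = -y := by rw [hy_def]; ring
  by_cases hycase : y < 16 * Real.log 2
  · calc P {ω | ∃ t, 0 ≤ t ∧ t < T ∧ x ≤ |W t ω|} ≤ 1 := prob_le_one
    _ ≤ ENNReal.ofReal (2 ^ 16 * Real.exp (-(x ^ 2) / (64 * T))) := by
        rw [← ENNReal.ofReal_one]
        apply ENNReal.ofReal_le_ofReal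
        rw [hnegy, Real.exp_neg, ← div_eq_mul_inv, le_div_iff₀ (Real.exp_pos y)]
        have h2 : Real.exp (16 * Real.log 2) = 2 ^ (16:ℕ) := by
          rw [show (16:ℝ) * Real.log 2 = ((16:ℕ):ℝ) * Real.log 2 by norm_num,
            Real.exp_nat_mul, Real.exp_log two_pos]
        have := Real.exp_le_exp.2 hycase.le
        rw [h2] at this
        norm_num at this ⊢
        linarith
  · push_neg at hycase
    set θ : ℕ → ℝ := fun m => x / 8 * (3 / 4) ^ m with hθ
    have hθpos : ∀ m, 0 < θ m := fun m => by rw [hθ]; positivity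
    set A : ℕ → ℕ → Set Ω := fun m j =>
      {ω | θ m ≤ |W (((j:ℝ) + 1) * T / 2 ^ (m + 1)) ω - W ((j:ℝ) * T / 2 ^ (m + 1)) ω|} with hA
    have hsubset : {ω | ∃ t, 0 ≤ t ∧ t < T ∧ x ≤ |W t ω|}
        ⊆ ⋃ (m : ℕ), ⋃ (j : ℕ) (_ : j < 2 ^ (m + 1)), A m j := by
      intro ω hω
      obtain ⟨t, ht0, htT, hxW⟩ := hω
      by_contra hnot
      simp only [mem_iUnion, not_exists] at hnot
      have hbound : ∀ m j : ℕ, j < 2 ^ (m + 1) →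
          |W (((j:ℝ) + 1) * T / 2 ^ (m + 1)) ω - W ((j:ℝ) * T / 2 ^ (m + 1)) ω| < θ m := by
        intro m j hj
        have := hnot m j hj
        rw [hA] at this
        simpa [not_le] using this
      set n : ℕ → ℕ := fun m => ⌊2 ^ m * t / T⌋₊ with hn
      set u : ℕ → ℝ := fun m => (n m : ℝ) * T / 2 ^ m with hu
      have hfrac1 : ∀ m : ℕ, (n m : ℝ) ≤ 2 ^ m * t / T := fun m =>
        Nat.floor_le (by positivity)
      have hfrac2 : ∀ m : ℕ, 2 ^ m * t / T < (n m : ℝ) + 1 := fun m =>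
        Nat.lt_floor_add_one _
      have hn0 : n 0 = 0 := by
        rw [hn]
        simp only [pow_zero, one_mul]
        exact Nat.floor_eq_zero.2 ((div_lt_one hT).2 htT)
      have hnm : ∀ m, n m < 2 ^ m := by
        intro m
        rw [hn]
        rw [Nat.floor_lt (by positivity)]
        push_cast
        calc (2:ℝ) ^ m * t / T = 2 ^ m * (t / T) := by ring
          _ < 2 ^ m * 1 := by
              apply mul_lt_mul_of_pos_left ((div_lt_one hT).2 htT) (by positivity)
          _ = 2 ^ m := by ring
      have hdouble : ∀ m : ℕ, n (m + 1) = 2 * n m ∨ n (m + 1) = 2 * n m + 1 := by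
        intro m
        have heq : (2:ℝ) ^ (m + 1) * t / T = 2 * (2 ^ m * t / T) := by ring
        have hlow : 2 * n m ≤ n (m + 1) := by
          rw [hn]
          apply Nat.le_floor
          rw [heq]
          push_cast
          nlinarith [hfrac1 m]
        have hhigh : n (m + 1) < 2 * n m + 2 := by
          rw [hn]
          rw [Nat.floor_lt (by positivity)]
          rw [heq]
          push_cast
          nlinarith [hfrac2 m]
        omega
      have htele : ∀ M : ℕ, |W (u M) ω| ≤ ∑ m ∈ Finset.range M, θ m := by
        intro M
        induction M with
        | zero =>
          have hu0 : u 0 = 0 := by rw [hu]; simp [hn0]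
          rw [hu0, hW.1 ω]
          simp
        | succ M ih =>
          rcases hdouble M with h | h
          · have heq : u (M + 1) = u M := by
              simp only [hu]
              rw [h]
              push_cast
              rw [pow_succ]
              field_simp
            rw [heq, Finset.sum_range_succ]
            have := (hθpos M).le
            linarith
          · set j := 2 * n M with hj
            have hjlt : j < 2 ^ (M + 1) := by
              have := hnm (M + 1)
              omega
            have h1 : u (M + 1) = ((j:ℝ) + 1) * T / 2 ^ (M + 1) := by
              simp only [hu]
              rw [h]; push_cast; ring
            have h2 : u M = (j:ℝ) * T / 2 ^ (M + 1) := by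
              simp only [hu, hj]
              push_cast
              rw [pow_succ]
              field_simp
            have hinc := hbound M j hjlt
            calc |W (u (M + 1)) ω|
                ≤ |W (u M) ω| + |W (u (M + 1)) ω - W (u M) ω| := by
                  have := abs_add_le (W (u M) ω) (W (u (M + 1)) ω - W (u M) ω)
                  simpa using this
              _ ≤ (∑ m ∈ Finset.range M, θ m) + θ M := by
                  apply add_le_add ih
                  rw [h1, h2]
                  exact hinc.le
              _ = ∑ m ∈ Finset.range (M + 1), θ m := (Finset.sum_range_succ _ _).symm
      have hbounds : ∀ M : ℕ, t - T / 2 ^ M ≤ u M ∧ u M ≤ t := by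
        intro M
        have hp : (0:ℝ) < 2 ^ M := by positivity
        have h1' : (n M : ℝ) * T ≤ 2 ^ M * t := by
          rw [← le_div_iff₀ hT]; exact hfrac1 M
        have h2' : 2 ^ M * t < ((n M : ℝ) + 1) * T := by
          rw [← div_lt_iff₀ hT]; exact hfrac2 M
        constructor
        · rw [hu, le_div_iff₀ hp]
          have hTc : T / 2 ^ M * 2 ^ M = T := div_mul_cancel₀ T hp.ne'
          nlinarith
        · rw [hu, div_le_iff₀ hp]
          nlinarith
      have hlim : Tendsto u atTop (𝓝 t) := by
        apply tendsto_of_tendsto_of_tendsto_of_le_of_le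
          (g := fun M : ℕ => t - T / 2 ^ M) (h := fun _ : ℕ => t)
        · have h0 : Tendsto (fun M : ℕ => T / 2 ^ M) atTop (𝓝 0) :=
            Filter.Tendsto.div_atTop tendsto_const_nhds
              (tendsto_pow_atTop_atTop_of_one_lt one_lt_two)
          have := tendsto_const_nhds (x := t) (f := atTop (α := ℕ)) |>.sub h0
          simpa using this
        · exact tendsto_const_nhds
        · exact fun M => (hbounds M).1
        · exact fun M => (hbounds M).2
      have hsum : ∀ M : ℕ, ∑ m ∈ Finset.range M, θ m ≤ x / 2 := by
        intro M
        have h34 : (3/4:ℝ) ≠ 1 := by norm_num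
        have hgeom : ∑ m ∈ Finset.range M, (3/4:ℝ) ^ m ≤ 4 := by
          rw [geom_sum_eq h34]
          have h1 : (0:ℝ) ≤ (3/4:ℝ) ^ M := by positivity
          have h2 : ((3/4:ℝ) ^ M - 1) / (3/4 - 1) = 4 * (1 - (3/4:ℝ) ^ M) := by
            field_simp
            ring
          rw [h2]
          nlinarith
        have heq : ∑ m ∈ Finset.range M, θ m = x / 8 * ∑ m ∈ Finset.range M, (3/4:ℝ) ^ m := by
          rw [Finset.mul_sum]
        rw [heq]
        nlinarith
      have hWt : |W t ω| ≤ x / 2 := by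
        have hcont : Tendsto (fun M => |W (u M) ω|) atTop (𝓝 |W t ω|) :=
          (((hW.2.1 ω).tendsto t).comp hlim).abs
        apply le_of_tendsto hcont
        filter_upwards with M
        exact (htele M).trans (hsum M)
      linarith
    have hA_bound : ∀ m j : ℕ, j < 2 ^ (m + 1) →
        P (A m j) ≤ ENNReal.ofReal (6 * Real.exp (-((9/8:ℝ) ^ m * y))) := by
      intro m j hj
      have hs : (0:ℝ) ≤ (j:ℝ) * T / 2 ^ (m + 1) := by positivity
      have hst : (j:ℝ) * T / 2 ^ (m + 1) < ((j:ℝ) + 1) * T / 2 ^ (m + 1) := by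
        apply div_lt_div_of_pos_right ?_ (by positivity)
        nlinarith
      have hdiff : ((j:ℝ) + 1) * T / 2 ^ (m + 1) - (j:ℝ) * T / 2 ^ (m + 1)
          = T / 2 ^ (m + 1) := by ring
      have htail := increment_tail W hW hs hst (hθpos m).le
      rw [hdiff] at htail
      have hexp_eq : -(θ m) ^ 2 / (2 * (T / 2 ^ (m + 1))) = -((9/8:ℝ) ^ m * y) := by
        simp only [hθ, hy_def]
        have e2 : ((3/4:ℝ) ^ m) ^ 2 = (9/16:ℝ) ^ m := by
          rw [← pow_mul, show (9/16:ℝ) = (3/4) ^ 2 by norm_num, ← pow_mul, Nat.mul_comm]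
        have e3 : (9/8:ℝ) ^ m = (9/16:ℝ) ^ m * 2 ^ m := by
          rw [← mul_pow]; norm_num
        have hTne : T ≠ 0 := hT.ne'
        have h2ne : (2:ℝ) ^ m ≠ 0 := by positivity
        rw [e3, ← e2, pow_succ]
        field_simp
        ring
      rw [hexp_eq] at htail
      exact htail
    have hrow : ∀ m : ℕ, P (⋃ (j : ℕ) (_ : j < 2 ^ (m + 1)), A m j)
        ≤ ENNReal.ofReal (12 * Real.exp (-y) * (1/2:ℝ) ^ m) := by
      intro m
      have hio : (⋃ (j : ℕ) (_ : j < 2 ^ (m + 1)), A m j)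
          = ⋃ j ∈ Finset.range (2 ^ (m + 1)), A m j := by
        simp [Finset.mem_range]
      have h1 : P (⋃ (j : ℕ) (_ : j < 2 ^ (m + 1)), A m j)
          ≤ ∑ j ∈ Finset.range (2 ^ (m + 1)), P (A m j) := by
        rw [hio]
        exact measure_biUnion_finset_le _ _
      have h2 : ∑ j ∈ Finset.range (2 ^ (m + 1)), P (A m j)
          ≤ (2 ^ (m + 1) : ℕ) * ENNReal.ofReal (6 * Real.exp (-((9/8:ℝ) ^ m * y))) := by
        calc ∑ j ∈ Finset.range (2 ^ (m + 1)), P (A m j)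
            ≤ ∑ j ∈ Finset.range (2 ^ (m + 1)),
              ENNReal.ofReal (6 * Real.exp (-((9/8:ℝ) ^ m * y))) := by
              apply Finset.sum_le_sum
              intro j hj
              exact hA_bound m j (Finset.mem_range.1 hj)
          _ = (2 ^ (m + 1) : ℕ) * ENNReal.ofReal (6 * Real.exp (-((9/8:ℝ) ^ m * y))) := by
              rw [Finset.sum_const, Finset.card_range, nsmul_eq_mul]
      have h3 : ((2 ^ (m + 1) : ℕ) : ℝ≥0∞) * ENNReal.ofReal (6 * Real.exp (-((9/8:ℝ) ^ m * y)))
          ≤ ENNReal.ofReal (12 * Real.exp (-y) * (1/2:ℝ) ^ m) := by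
        have hcast : ((2 ^ (m + 1) : ℕ) : ℝ≥0∞) = ENNReal.ofReal ((2:ℝ) ^ (m + 1)) := by
          rw [ENNReal.ofReal_pow (by norm_num)]
          norm_num
        rw [hcast, ← ENNReal.ofReal_mul (by positivity)]
        apply ENNReal.ofReal_le_ofReal
        -- real inequality
        have hbern : (1:ℝ) + (m:ℝ) * (1/8) ≤ (9/8:ℝ) ^ m := by
          have h := one_add_mul_le_pow (a := (1/8:ℝ)) (by norm_num) m
          rw [show (1:ℝ) + 1/8 = 9/8 by norm_num] at h
          exact h
        have hkey : (4:ℝ) ^ m ≤ Real.exp (((9/8:ℝ) ^ m - 1) * y) := by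
          have h4 : (4:ℝ) ^ m = Real.exp ((m:ℝ) * Real.log 4) := by
            rw [Real.exp_nat_mul, Real.exp_log (by norm_num : (0:ℝ) < 4)]
          rw [h4]
          apply Real.exp_le_exp.2
          have hlog4 : Real.log 4 = 2 * Real.log 2 := by
            rw [show (4:ℝ) = 2 ^ (2:ℕ) by norm_num, Real.log_pow]
            push_cast; ring
          rw [hlog4]
          have hm8 : (m:ℝ) * (1/8) ≤ (9/8:ℝ) ^ m - 1 := by linarith
          have hlog2pos : 0 < Real.log 2 := Real.log_pos one_lt_two
          calc (m:ℝ) * (2 * Real.log 2) = ((m:ℝ) * (1/8)) * (16 * Real.log 2) := by ring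
            _ ≤ ((9/8:ℝ) ^ m - 1) * (16 * Real.log 2) := by
                apply mul_le_mul_of_nonneg_right hm8 (by positivity)
            _ ≤ ((9/8:ℝ) ^ m - 1) * y := by
                apply mul_le_mul_of_nonneg_left hycase
                nlinarith
        have hsplit : Real.exp (-((9/8:ℝ) ^ m * y))
            = Real.exp (-y) / Real.exp (((9/8:ℝ) ^ m - 1) * y) := by
          rw [← Real.exp_sub]
          congr 1
          ring
        rw [hsplit]
        have hE : (0:ℝ) < Real.exp (((9/8:ℝ) ^ m - 1) * y) := Real.exp_pos _
        have h2m : ((1:ℝ)/2) ^ m * (4:ℝ) ^ m = 2 ^ m := by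
          rw [← mul_pow]; norm_num
        have heq2 : (2:ℝ) ^ (m+1) * (6 * (Real.exp (-y) / Real.exp (((9/8:ℝ) ^ m - 1) * y)))
            = (2 ^ (m+1) * 6 * Real.exp (-y)) / Real.exp (((9/8:ℝ) ^ m - 1) * y) := by
          ring
        rw [heq2, div_le_iff₀ hE]
        calc (2:ℝ) ^ (m+1) * 6 * Real.exp (-y)
            = 12 * Real.exp (-y) * ((1/2:ℝ)^m * (4:ℝ)^m) := by
              rw [h2m, pow_succ]; ring
          _ ≤ 12 * Real.exp (-y) * ((1/2:ℝ)^m * Real.exp (((9/8:ℝ) ^ m - 1) * y)) := by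
              have h5 := mul_le_mul_of_nonneg_left hkey (show (0:ℝ) ≤ (1/2:ℝ)^m by positivity)
              exact mul_le_mul_of_nonneg_left h5 (by positivity)
          _ = 12 * Real.exp (-y) * (1/2:ℝ)^m * Real.exp (((9/8:ℝ) ^ m - 1) * y) := by ring
      calc P (⋃ (j : ℕ) (_ : j < 2 ^ (m + 1)), A m j)
          ≤ ∑ j ∈ Finset.range (2 ^ (m + 1)), P (A m j) := h1
        _ ≤ (2 ^ (m + 1) : ℕ) * ENNReal.ofReal (6 * Real.exp (-((9/8:ℝ) ^ m * y))) := h2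
        _ ≤ ENNReal.ofReal (12 * Real.exp (-y) * (1/2:ℝ) ^ m) := h3
    calc P {ω | ∃ t, 0 ≤ t ∧ t < T ∧ x ≤ |W t ω|}
        ≤ P (⋃ (m : ℕ), ⋃ (j : ℕ) (_ : j < 2 ^ (m + 1)), A m j) := measure_mono hsubset
      _ ≤ ∑' (m : ℕ), P (⋃ (j : ℕ) (_ : j < 2 ^ (m + 1)), A m j) := measure_iUnion_le _
      _ ≤ ∑' (m : ℕ), ENNReal.ofReal (12 * Real.exp (-y) * (1/2:ℝ) ^ m) :=
          ENNReal.tsum_le_tsum hrow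
      _ = ENNReal.ofReal (12 * Real.exp (-y)) * ∑' (m : ℕ), (ENNReal.ofReal (1/2:ℝ)) ^ m := by
          rw [← ENNReal.tsum_mul_left]
          congr 1
          ext m
          rw [← ENNReal.ofReal_pow (by norm_num), ← ENNReal.ofReal_mul (by positivity)]
      _ = ENNReal.ofReal (12 * Real.exp (-y)) * 2 := by
          congr 1
          have hhalf : ENNReal.ofReal (1/2:ℝ) = 2⁻¹ := by
            rw [one_div, ENNReal.ofReal_inv_of_pos two_pos]
            norm_num
          rw [hhalf, ENNReal.tsum_geometric, ENNReal.one_sub_inv_two, inv_inv]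
      _ ≤ ENNReal.ofReal (2 ^ 16 * Real.exp (-(x ^ 2) / (64 * T))) := by
          rw [hnegy]
          rw [show (2:ℝ≥0∞) = ENNReal.ofReal (2:ℝ) by norm_num]
          rw [← ENNReal.ofReal_mul (by positivity)]
          apply ENNReal.ofReal_le_ofReal
          nlinarith [Real.exp_pos (-y)]

set_option maxHeartbeats 1000000 in
/-- For `dq = α q dt + dW`, `q(0) = Q₀ > 0` with `α > 0`, the probability that `q` ever
falls to `Q₀/2` is at most `C exp(-c Q₀² α)` for absolute constants `C, c > 0`. -/
theorem prob_ever_halves :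
    ∃ C > (0 : ℝ), ∃ c > (0 : ℝ),
      ∀ (Ω : Type) (_ : MeasurableSpace Ω) (P : Measure Ω), IsProbabilityMeasure P →
      ∀ (W : ℝ → Ω → ℝ), IsStandardBrownianMotion P W →
      ∀ (Q₀ α : ℝ), 0 < Q₀ → 0 < α →
      ∀ (q : ℝ → Ω → ℝ), (∀ t, Measurable (q t)) → (∀ ω, Continuous fun t => q t ω) →
      (∀ ω, ∀ t ≥ (0 : ℝ), q t ω = Q₀ + (∫ s in (0 : ℝ)..t, α * q s ω) + W t ω) →
      P {ω | ∃ t ≥ (0 : ℝ), q t ω ≤ Q₀ / 2}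
        ≤ ENNReal.ofReal (C * Real.exp (-(c * Q₀ ^ 2 * α))) := by
  refine ⟨2 ^ 20, by norm_num, 1 / 512, by norm_num, ?_⟩
  intro Ω _ P hP W hW Q₀ α hQ₀ hα q hqmeas hqcont hqeq
  haveI := hP
  set a : ℝ := Q₀ / 2 with ha
  set b : ℝ := α * Q₀ / 2 with hb
  have hapos : 0 < a := by rw [ha]; positivity
  have hbpos : 0 < b := by rw [hb]; positivity
  have hcQ : (1:ℝ) / 512 * Q₀ ^ 2 * α = a * b / 128 := by rw [ha, hb]; ring
  by_cases hreg : 512 * Real.log 2 ≤ a * b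
  case neg =>
    -- small regime : the bound is ≥ 1
    calc P {ω | ∃ t ≥ (0:ℝ), q t ω ≤ Q₀ / 2} ≤ 1 := prob_le_one
      _ ≤ ENNReal.ofReal (2 ^ 20 * Real.exp (-(1 / 512 * Q₀ ^ 2 * α))) := by
          rw [← ENNReal.ofReal_one]
          apply ENNReal.ofReal_le_ofReal
          rw [hcQ]
          push_neg at hreg
          have h1 : a * b / 128 < 4 * Real.log 2 := by linarith
          have h2 : Real.exp (-(4 * Real.log 2)) ≤ Real.exp (-(a * b / 128)) :=
            Real.exp_le_exp.2 (by linarith)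
          have h3 : Real.exp (4 * Real.log 2) = 2 ^ (4:ℕ) := by
            rw [show (4:ℝ) * Real.log 2 = ((4:ℕ):ℝ) * Real.log 2 by norm_num,
              Real.exp_nat_mul, Real.exp_log two_pos]
          have h4 : Real.exp (-(4 * Real.log 2)) = 1 / 16 := by
            rw [Real.exp_neg, h3]; norm_num
          rw [h4] at h2
          nlinarith
  case pos =>
    set F : ℤ → Set Ω := fun k =>
      {ω | ∃ t, 0 ≤ t ∧ t < (2:ℝ) ^ (k + 1) ∧ a + b * (2:ℝ) ^ (k - 1) ≤ |W t ω|} with hF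
    have hsub : {ω | ∃ t ≥ (0:ℝ), q t ω ≤ Q₀ / 2} ⊆ ⋃ (k : ℤ), F k := by
      intro ω hω
      obtain ⟨t₁, ht₁0, ht₁⟩ := hω
      set S := {t : ℝ | 0 ≤ t ∧ q t ω ≤ Q₀ / 2} with hS
      have hSne : S.Nonempty := ⟨t₁, ht₁0, ht₁⟩
      have hSbdd : BddBelow S := ⟨0, fun s hs => hs.1⟩
      have hSclosed : IsClosed S := by
        have hSeq : S = Ici (0:ℝ) ∩ (fun t => q t ω) ⁻¹' (Iic (Q₀/2)) := by
          ext s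
          simp only [hS, mem_setOf_eq, mem_inter_iff, mem_Ici, mem_preimage, mem_Iic]
        rw [hSeq]
        exact isClosed_Ici.inter (IsClosed.preimage (hqcont ω) isClosed_Iic)
      set τ := sInf S with hτ
      have hτS : τ ∈ S := hSclosed.csInf_mem hSne hSbdd
      have hτ0 : 0 ≤ τ := hτS.1
      have hq0 : q 0 ω = Q₀ := by
        have h := hqeq ω 0 le_rfl
        simpa [hW.1 ω] using h
      have hτpos : 0 < τ := by
        rcases hτ0.lt_or_eq with h | h
        · exact h
        · exfalso
          have h2 := hτS.2
          rw [← h, hq0] at h2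
          linarith
      have hqτ : Q₀ / 2 ≤ q τ ω := by
        have hlt : ∀ r, 0 ≤ r → r < τ → Q₀ / 2 ≤ q r ω := by
          intro r hr0 hrτ
          by_contra hcon
          push_neg at hcon
          have hmem : r ∈ S := ⟨hr0, hcon.le⟩
          have h6 := csInf_le hSbdd hmem
          rw [← hτ] at h6
          linarith
        have htend : Tendsto (fun r => q r ω) (𝓝[<] τ) (𝓝 (q τ ω)) :=
          ((hqcont ω).tendsto τ).mono_left nhdsWithin_le_nhds
        apply ge_of_tendsto htend
        have hmem : Ioo (0:ℝ) τ ∈ 𝓝[<] τ := Ioo_mem_nhdsLT_of_mem ⟨hτpos, le_rfl⟩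
        filter_upwards [hmem] with r hr
        exact hlt r hr.1.le hr.2
      have hqge : ∀ s ∈ Icc (0:ℝ) τ, Q₀ / 2 ≤ q s ω := by
        intro s hs
        rcases lt_or_eq_of_le hs.2 with h | h
        · by_contra hcon
          push_neg at hcon
          have hmem : s ∈ S := ⟨hs.1, hcon.le⟩
          have h6 := csInf_le hSbdd hmem
          rw [← hτ] at h6
          linarith
        · rw [h]; exact hqτ
      have hintineq : α * Q₀ / 2 * τ ≤ ∫ s in (0:ℝ)..τ, α * q s ω := by
        have h1 : ∫ s in (0:ℝ)..τ, α * (Q₀ / 2) ≤ ∫ s in (0:ℝ)..τ, α * q s ω := by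
          apply intervalIntegral.integral_mono_on hτ0
          · exact intervalIntegrable_const
          · exact (continuous_const.mul (hqcont ω)).intervalIntegrable _ _
          · intro s hs
            have := hqge s hs
            nlinarith
        rw [intervalIntegral.integral_const] at h1
        have h2 : (τ - 0) • (α * (Q₀ / 2)) = α * Q₀ / 2 * τ := by
          rw [smul_eq_mul]; ring
        rw [h2] at h1
        exact h1
      have hWτ : W τ ω ≤ -(a + b * τ) := by
        have heq := hqeq ω τ hτ0
        have h2 := hτS.2
        rw [ha, hb]
        linarith
      have hWabs : a + b * τ ≤ |W τ ω| := by
        have h1 : a + b * τ ≤ -(W τ ω) := by linarith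
        exact h1.trans (neg_le_abs _)
      set k : ℤ := ⌈Real.logb 2 τ⌉ with hk
      refine mem_iUnion.2 ⟨k, τ, hτ0, ?_, ?_⟩
      · have h1 : Real.logb 2 τ ≤ (k:ℝ) := Int.le_ceil _
        have h2 : τ = (2:ℝ) ^ (Real.logb 2 τ) := (Real.rpow_logb two_pos (by norm_num) hτpos).symm
        calc τ = (2:ℝ) ^ (Real.logb 2 τ) := h2
          _ ≤ (2:ℝ) ^ ((k:ℝ)) := Real.rpow_le_rpow_of_exponent_le one_le_two h1
          _ = (2:ℝ) ^ (k:ℤ) := Real.rpow_intCast 2 k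
          _ < (2:ℝ) ^ (k + 1:ℤ) := by
              apply zpow_lt_zpow_right₀ one_lt_two (by omega)
      · have h3 : (k:ℝ) - 1 < Real.logb 2 τ := by
          have := Int.ceil_lt_add_one (Real.logb 2 τ)
          push_cast at this ⊢
          linarith
        have h4 : (2:ℝ) ^ (k - 1:ℤ) ≤ τ := by
          calc (2:ℝ) ^ (k - 1:ℤ) = (2:ℝ) ^ (((k:ℝ) - 1)) := by
                rw [← Real.rpow_intCast]; push_cast; norm_num
            _ ≤ (2:ℝ) ^ (Real.logb 2 τ) :=
                Real.rpow_le_rpow_of_exponent_le one_le_two h3.le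
            _ = τ := Real.rpow_logb two_pos (by norm_num) hτpos
        have h5 : a + b * (2:ℝ) ^ (k - 1:ℤ) ≤ a + b * τ := by nlinarith
        exact h5.trans hWabs
    -- measure bound
    set k₀ : ℤ := ⌈Real.logb 2 (2 * a / b)⌉ with hk₀
    set D : ℝ := 2 ^ 16 * Real.exp (-(a * b / 128)) with hD
    have hDpos : 0 < D := by rw [hD]; positivity
    have hterm : ∀ k : ℤ, P (F k) ≤ ENNReal.ofReal (D * (1/2:ℝ) ^ (k - k₀).natAbs) := by
      intro k
      have hTk : (0:ℝ) < (2:ℝ) ^ (k + 1:ℤ) := by positivity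
      have hxk : (0:ℝ) < a + b * (2:ℝ) ^ (k - 1:ℤ) := by positivity
      have h0 := bm_sup_bound P W hW hTk hxk
      refine le_trans (le_of_eq (by rw [hF])) (h0.trans (ENNReal.ofReal_le_ofReal ?_))
      -- real inequality on exponents
      set p : ℝ := (2:ℝ) ^ (k:ℤ) with hp
      have hppos : 0 < p := by rw [hp]; positivity
      have hTkp : (2:ℝ) ^ (k + 1:ℤ) = 2 * p := by
        rw [hp, zpow_add_one₀ (by norm_num : (2:ℝ) ≠ 0)]; ring
      have hxkp : (2:ℝ) ^ (k - 1:ℤ) = p / 2 := by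
        rw [hp, zpow_sub_one₀ (by norm_num : (2:ℝ) ≠ 0)]; ring
      rw [hTkp, hxkp]
      set s : ℝ := a^2 / (128 * p) + b^2 * p / 512 with hs
      have hexp_eq : -((a + b * (p/2))^2) / (64 * (2 * p)) = -(a * b / 128 + s) := by
        rw [hs]
        field_simp
        ring
      rw [hexp_eq]
      set n : ℕ := (k - k₀).natAbs with hn
      -- s ≥ (a*b/512) * 2^n
      have hq0low : 2 * a / b ≤ (2:ℝ) ^ (k₀:ℤ) := by
        have h1 : Real.logb 2 (2 * a / b) ≤ (k₀:ℝ) := Int.le_ceil _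
        calc 2 * a / b = (2:ℝ) ^ (Real.logb 2 (2 * a / b)) :=
              (Real.rpow_logb two_pos (by norm_num) (by positivity)).symm
          _ ≤ (2:ℝ) ^ ((k₀:ℝ)) := Real.rpow_le_rpow_of_exponent_le one_le_two h1
          _ = (2:ℝ) ^ (k₀:ℤ) := Real.rpow_intCast 2 k₀
      have hq0high : (2:ℝ) ^ (k₀:ℤ) ≤ 4 * a / b := by
        have h1 : (k₀:ℝ) < Real.logb 2 (2 * a / b) + 1 := by
          have := Int.ceil_lt_add_one (Real.logb 2 (2 * a / b))
          push_cast at this ⊢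
          linarith
        calc (2:ℝ) ^ (k₀:ℤ) = (2:ℝ) ^ ((k₀:ℝ)) := (Real.rpow_intCast 2 k₀).symm
          _ ≤ (2:ℝ) ^ (Real.logb 2 (2 * a / b) + 1) :=
              Real.rpow_le_rpow_of_exponent_le one_le_two h1.le
          _ = (2:ℝ) ^ (Real.logb 2 (2 * a / b)) * 2 := by
              rw [Real.rpow_add two_pos, Real.rpow_one]
          _ = (2 * a / b) * 2 := by
              rw [Real.rpow_logb two_pos (by norm_num) (by positivity)]
          _ = 4 * a / b := by ring
      have hskey : a * b / 512 * 2 ^ n ≤ s := by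
        rcases le_or_gt k₀ k with hkk | hkk
        · -- k ≥ k₀ : use b² p /512
          have hnz : (k - k₀) = (n:ℤ) := by
            rw [hn]; rw [Int.natAbs_of_nonneg (by omega)]
          have hpfac : p = (2:ℝ) ^ (k₀:ℤ) * 2 ^ n := by
            rw [hp, show (k:ℤ) = k₀ + (k - k₀) by ring, zpow_add₀ (by norm_num : (2:ℝ) ≠ 0),
              hnz, zpow_natCast]
          have h1 : (2 * a / b) * 2 ^ n ≤ p := by
            rw [hpfac]
            apply mul_le_mul_of_nonneg_right hq0low (by positivity)
          have h2 : b^2 * ((2 * a / b) * 2 ^ n) / 512 ≤ b^2 * p / 512 := by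
            apply div_le_div_of_nonneg_right ?_ (by norm_num)
            exact mul_le_mul_of_nonneg_left h1 (by positivity)
          have h3 : b^2 * ((2 * a / b) * 2 ^ n) / 512 = a * b / 256 * 2 ^ n := by
            field_simp
            ring
          rw [h3] at h2
          have h4 : (0:ℝ) < a^2 / (128 * p) := by positivity
          have h5 : (0:ℝ) ≤ (2:ℝ) ^ n := by positivity
          have h6 : a * b / 512 * 2 ^ n ≤ a * b / 256 * 2 ^ n := by
            apply mul_le_mul_of_nonneg_right ?_ h5
            nlinarith
          rw [hs]
          linarith
        · -- k < k₀ : use a²/(128 p)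
          have hnz : (k₀ - k) = (n:ℤ) := by
            rw [hn, show k - k₀ = -(k₀ - k) by ring, Int.natAbs_neg,
              Int.natAbs_of_nonneg (by omega)]
          have hpfac : p * 2 ^ n = (2:ℝ) ^ (k₀:ℤ) := by
            rw [hp, ← zpow_natCast (2:ℝ) n, ← hnz, ← zpow_add₀ (by norm_num : (2:ℝ) ≠ 0)]
            congr 1
            ring
          have h1 : p * 2 ^ n ≤ 4 * a / b := hpfac ▸ hq0high
          -- a²/(128 p) ≥ a² 2^n/(128 * (4a/b)) = a b 2^n/512
          have h2 : a * b / 512 * 2 ^ n ≤ a^2 / (128 * p) := by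
            rw [le_div_iff₀ (by positivity : (0:ℝ) < 128 * p)]
            have h3 := mul_le_mul_of_nonneg_left h1 (show (0:ℝ) ≤ a * b / 4 by positivity)
            calc a * b / 512 * 2 ^ n * (128 * p) = (a * b / 4) * (p * 2 ^ n) := by ring
              _ ≤ (a * b / 4) * (4 * a / b) := h3
              _ = a^2 := by field_simp
          have h4 : (0:ℝ) < b^2 * p / 512 := by positivity
          rw [hs]
          linarith
      -- now finish the real inequality
      have hn2 : (n:ℝ) ≤ (2:ℝ) ^ n := by
        have h := Nat.lt_two_pow_self (n := n)
        have h2 : ((n:ℕ):ℝ) ≤ ((2 ^ n : ℕ):ℝ) := Nat.cast_le.2 h.le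
        push_cast at h2
        exact h2
      have hslog : Real.log 2 * n ≤ s := by
        have h1 : Real.log 2 * (2:ℝ)^n ≤ a * b / 512 * 2 ^ n := by
          apply mul_le_mul_of_nonneg_right ?_ (by positivity)
          linarith
        have h2 : Real.log 2 * (n:ℝ) ≤ Real.log 2 * (2:ℝ)^n := by
          apply mul_le_mul_of_nonneg_left hn2 (Real.log_pos one_lt_two).le
        exact h2.trans (h1.trans hskey)
      have hhalfpow : Real.exp (-s) ≤ (1/2:ℝ) ^ n := by
        have h1 : Real.exp (-s) ≤ Real.exp (-(Real.log 2 * n)) :=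
          Real.exp_le_exp.2 (by linarith)
        have h2 : Real.exp (-(Real.log 2 * n)) = (1/2:ℝ) ^ n := by
          rw [show -(Real.log 2 * (n:ℝ)) = (n:ℝ) * (-Real.log 2) by ring, Real.exp_nat_mul,
            Real.exp_neg, Real.exp_log two_pos]
          norm_num
        exact h1.trans_eq h2
      calc 2 ^ 16 * Real.exp (-(a * b / 128 + s))
          = 2 ^ 16 * Real.exp (-(a * b / 128)) * Real.exp (-s) := by
            rw [show -(a * b / 128 + s) = -(a * b / 128) + -s by ring, Real.exp_add]
            ring
        _ ≤ 2 ^ 16 * Real.exp (-(a * b / 128)) * (1/2:ℝ) ^ n := by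
            apply mul_le_mul_of_nonneg_left hhalfpow (by positivity)
        _ = D * (1/2:ℝ) ^ n := by rw [hD]
    have hgeo : ∑' (m : ℕ), ENNReal.ofReal (D * (1/2:ℝ) ^ m) = ENNReal.ofReal D * 2 := by
      have h1 : ∀ m : ℕ, ENNReal.ofReal (D * (1/2:ℝ) ^ m)
          = ENNReal.ofReal D * (ENNReal.ofReal (1/2:ℝ)) ^ m := by
        intro m
        rw [← ENNReal.ofReal_pow (by norm_num), ← ENNReal.ofReal_mul hDpos.le]
      simp_rw [h1]
      rw [ENNReal.tsum_mul_left]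
      congr 1
      have hhalf : ENNReal.ofReal (1/2:ℝ) = 2⁻¹ := by
        rw [one_div, ENNReal.ofReal_inv_of_pos two_pos]; norm_num
      rw [hhalf, ENNReal.tsum_geometric, ENNReal.one_sub_inv_two, inv_inv]
    have hgeo2 : ∑' (m : ℕ), ENNReal.ofReal (D * (1/2:ℝ) ^ (m + 1)) ≤ ENNReal.ofReal D * 2 := by
      rw [← hgeo]
      apply ENNReal.tsum_le_tsum
      intro m
      apply ENNReal.ofReal_le_ofReal
      apply mul_le_mul_of_nonneg_left ?_ hDpos.le
      rw [pow_succ]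
      nlinarith [pow_nonneg (by norm_num : (0:ℝ) ≤ 1/2) m]
    have hZsplit : ∑' (j : ℤ), ENNReal.ofReal (D * (1/2:ℝ) ^ j.natAbs)
        = (∑' (m : ℕ), ENNReal.ofReal (D * (1/2:ℝ) ^ ((m:ℤ)).natAbs))
          + ∑' (m : ℕ), ENNReal.ofReal (D * (1/2:ℝ) ^ ((-((m:ℤ) + 1)).natAbs)) :=
      tsum_of_nat_of_neg_add_one ENNReal.summable ENNReal.summable
    have hnatAbs1 : ∀ m : ℕ, ((m:ℤ)).natAbs = m := fun m => Int.natAbs_natCast m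
    have hnatAbs2 : ∀ m : ℕ, ((-((m:ℤ) + 1)).natAbs) = m + 1 := by
      intro m
      rw [Int.natAbs_neg]
      rw [show ((m:ℤ) + 1) = ((m + 1 : ℕ) : ℤ) by push_cast; ring]
      exact Int.natAbs_natCast (m + 1)
    have hZbound : ∑' (j : ℤ), ENNReal.ofReal (D * (1/2:ℝ) ^ j.natAbs)
        ≤ ENNReal.ofReal D * 4 := by
      rw [hZsplit]
      simp_rw [hnatAbs1, hnatAbs2]
      calc (∑' (m : ℕ), ENNReal.ofReal (D * (1/2:ℝ) ^ m))
            + ∑' (m : ℕ), ENNReal.ofReal (D * (1/2:ℝ) ^ (m + 1))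
          ≤ ENNReal.ofReal D * 2 + ENNReal.ofReal D * 2 := add_le_add hgeo.le hgeo2
        _ = ENNReal.ofReal D * 4 := by ring
    calc P {ω | ∃ t ≥ (0:ℝ), q t ω ≤ Q₀ / 2}
        ≤ P (⋃ (k : ℤ), F k) := measure_mono hsub
      _ ≤ ∑' (k : ℤ), P (F k) := measure_iUnion_le _
      _ ≤ ∑' (k : ℤ), ENNReal.ofReal (D * (1/2:ℝ) ^ (k - k₀).natAbs) :=
          ENNReal.tsum_le_tsum hterm
      _ = ∑' (j : ℤ), ENNReal.ofReal (D * (1/2:ℝ) ^ j.natAbs) :=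
          (Equiv.subRight k₀).tsum_eq (fun j : ℤ => ENNReal.ofReal (D * (1/2:ℝ) ^ j.natAbs))
      _ ≤ ENNReal.ofReal D * 4 := hZbound
      _ ≤ ENNReal.ofReal (2 ^ 20 * Real.exp (-(1 / 512 * Q₀ ^ 2 * α))) := by
          rw [show (4:ℝ≥0∞) = ENNReal.ofReal (4:ℝ) by norm_num,
            ← ENNReal.ofReal_mul hDpos.le]
          apply ENNReal.ofReal_le_ofReal
          rw [hcQ, hD]
          nlinarith [Real.exp_pos (-(a * b / 128))]
end

section
/- Let Q₀ > 0, α > 0, and 0 < η < 1/log 2, and let q solve dq(t) = αq(t)dt + dW(t), q(0) = Q₀. Then there exist constants C > 0 (absolute) and c_η > 0 (depending only on η) such that Prob[ q(t) < 2Q₀ for all t ∈ [0, 1/(ηα)] ] ≤ C·exp(−c_η·Q₀²·α). -/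
open MeasureTheory ProbabilityTheory

section Aux
open Set

lemma gaussian_tail (v : NNReal) (hv : v ≠ 0) (c : ℝ) (hc : 0 ≤ c) :
    gaussianReal 0 v (Set.Iic (-c)) ≤ ENNReal.ofReal (Real.exp (-c^2 / (2*v))) := by
  have hvpos : (0:ℝ) < v := lt_of_le_of_ne v.coe_nonneg (by exact_mod_cast (Ne.symm hv))
  have hpdf : ∀ x ∈ Set.Iic (-c),
      gaussianPDF 0 v x ≤ ENNReal.ofReal (Real.exp (-c^2 / (2*v))) * gaussianPDF (-c) v x := by
    intro x hx
    simp only [Set.mem_Iic] at hx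
    rw [gaussianPDF_def, gaussianPDF_def, ← ENNReal.ofReal_mul (Real.exp_pos _).le]
    apply ENNReal.ofReal_le_ofReal
    rw [gaussianPDFReal_def, gaussianPDFReal_def]
    simp only []
    rw [mul_left_comm]
    apply mul_le_mul_of_nonneg_left _ (by positivity)
    rw [← Real.exp_add]
    apply Real.exp_le_exp.mpr
    rw [← add_div, div_le_div_iff_of_pos_right (by positivity)]
    nlinarith [mul_nonneg hc (neg_nonneg.2 (by linarith : x + c ≤ 0))]
  calc gaussianReal 0 v (Set.Iic (-c)) = ∫⁻ x in Set.Iic (-c), gaussianPDF 0 v x :=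
        gaussianReal_apply 0 hv _
    _ ≤ ∫⁻ x in Set.Iic (-c), ENNReal.ofReal (Real.exp (-c^2 / (2*v))) * gaussianPDF (-c) v x :=
        setLIntegral_mono (((measurable_gaussianPDF _ _).const_mul _)) hpdf
    _ = ENNReal.ofReal (Real.exp (-c^2 / (2*v))) * ∫⁻ x in Set.Iic (-c), gaussianPDF (-c) v x := by
        rw [lintegral_const_mul _ (measurable_gaussianPDF _ _)]
    _ ≤ ENNReal.ofReal (Real.exp (-c^2 / (2*v))) * ∫⁻ x, gaussianPDF (-c) v x := by
        gcongr; exact Measure.restrict_le_self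
    _ = ENNReal.ofReal (Real.exp (-c^2 / (2*v))) := by
        rw [lintegral_gaussianPDF_eq_one _ hv, mul_one]

lemma gaussian_half (v : NNReal) : (2:ENNReal)⁻¹ ≤ gaussianReal 0 v (Set.Iic 0) := by
  by_cases hv : v = 0
  · rw [hv, gaussianReal_zero_var, Measure.dirac_apply' _ measurableSet_Iic,
      Set.indicator_of_mem (by simp : (0:ℝ) ∈ Set.Iic 0)]
    simp
  · have hmap : (gaussianReal 0 v).map (fun x => -x) = gaussianReal 0 v := by
      have h := gaussianReal_map_const_mul (μ := 0) (v := v) (-1)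
      simp only [neg_one_mul, mul_zero] at h
      rw [h]; congr 1; ext; norm_num
    have hIci : gaussianReal 0 v (Set.Ici 0) = gaussianReal 0 v (Set.Iic 0) := by
      conv_lhs => rw [← hmap]
      rw [Measure.map_apply measurable_neg measurableSet_Ici]
      congr 1
      ext x
      simp
    have h1 : (1:ENNReal) ≤ gaussianReal 0 v (Set.Iic 0) + gaussianReal 0 v (Set.Ici 0) := by
      have : (gaussianReal 0 v) (Set.Iic 0 ∪ Set.Ici 0) ≤ _ := measure_union_le (Set.Iic 0) (Set.Ici 0)
      rwa [Set.Iic_union_Ici, measure_univ] at this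
    rw [hIci] at h1
    rw [← two_mul] at h1
    rw [ENNReal.inv_le_iff_le_mul (by norm_num) (by norm_num)]
    exact h1

lemma discrete_reflection {Ω : Type} [MeasurableSpace Ω] (P : Measure Ω) [IsProbabilityMeasure P]
    (W : ℝ → Ω → ℝ) (hW : IsStandardBrownianMotion P W)
    (n : ℕ) (ts : Fin (n+1) → ℝ) (hmono : Monotone ts) (h0 : ts 0 = 0) (c : ℝ) :
    P (⋃ k, {ω | W (ts k) ω ≤ -c}) ≤ 2 * P {ω | W (ts (Fin.last n)) ω ≤ -c} := by
  classical
  obtain ⟨hW0, hWcont, hWmeas, hWlaw, hWind⟩ := hW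
  set X : Fin n → Ω → ℝ := fun i ω => W (ts i.succ) ω - W (ts i.castSucc) ω with hX
  have hts0 : ∀ i, 0 ≤ ts i := fun i => h0 ▸ hmono (Fin.zero_le i)
  have hXind := hWind n ts hmono hts0
  have hXmeas : ∀ i, Measurable (X i) := fun i => (hWmeas _).sub (hWmeas _)
  have hrep : ∀ (j : Fin (n+1)) (ω : Ω),
      W (ts j) ω = ∑ i ∈ Finset.univ.filter (fun i : Fin n => (i:ℕ) < (j:ℕ)), X i ω := by
    intro j ω
    induction j using Fin.induction with
    | zero => simp [h0, hW0 ω]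
    | succ j ih =>
      have hset : Finset.univ.filter (fun i : Fin n => (i:ℕ) < ((j.succ : Fin (n+1)):ℕ))
          = insert j (Finset.univ.filter (fun i : Fin n => (i:ℕ) < ((j.castSucc : Fin (n+1)):ℕ))) := by
        ext i
        simp only [Finset.mem_filter, Finset.mem_univ, true_and, Finset.mem_insert,
          Fin.val_succ, Fin.coe_castSucc, Fin.ext_iff]
        omega
      rw [hset, Finset.sum_insert (by simp), ← ih]
      simp only [X]
      ring
  set E : Fin (n+1) → Set Ω := fun k => {ω | W (ts k) ω ≤ -c} with hE
  set B : Fin (n+1) → Set Ω := fun k => E k \ ⋃ (j : Fin (n+1)) (_ : j < k), E j with hB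
  have hEmeas : ∀ k, MeasurableSet (E k) := fun k => measurableSet_le (hWmeas _) measurable_const
  have hBmeas : ∀ k, MeasurableSet (B k) := fun k =>
    (hEmeas k).diff (MeasurableSet.iUnion fun j => MeasurableSet.iUnion fun _ => hEmeas j)
  have hUnion : (⋃ k, E k) ⊆ ⋃ k, B k := by
    intro ω hω
    simp only [Set.mem_iUnion] at hω ⊢
    obtain ⟨k, hk⟩ := hω
    have hne : (Finset.univ.filter (fun k => ω ∈ E k)).Nonempty :=
      ⟨k, by simp [hk]⟩
    set k₀ := (Finset.univ.filter (fun k => ω ∈ E k)).min' hne with hk₀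
    refine ⟨k₀, ?_, ?_⟩
    · have := Finset.min'_mem _ hne
      simp only [Finset.mem_filter] at this
      exact this.2
    · intro hmem
      simp only [Set.mem_iUnion] at hmem
      obtain ⟨j, hj, hjE⟩ := hmem
      have : k₀ ≤ j := Finset.min'_le _ _ (by simp [hjE])
      exact absurd hj (not_lt.mpr this)
  have hdisjkey : ∀ a b : Fin (n+1), a < b → Disjoint (B a) (B b) := by
    intro a b hab
    rw [Set.disjoint_left]
    intro ω ha hb
    exact hb.2 (Set.mem_iUnion.2 ⟨a, Set.mem_iUnion.2 ⟨hab, ha.1⟩⟩)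
  have hdisj : Pairwise (Function.onFun Disjoint B) := by
    intro a b hab
    rcases hab.lt_or_gt with h | h
    · exact hdisjkey _ _ h
    · exact (hdisjkey _ _ h).symm
  set D : Fin (n+1) → Set Ω := fun k => {ω | W (ts (Fin.last n)) ω - W (ts k) ω ≤ 0} with hD
  have hDmeas : ∀ k, MeasurableSet (D k) :=
    fun k => measurableSet_le ((hWmeas _).sub (hWmeas _)) measurable_const
  have hDhalf : ∀ k, (2:ENNReal)⁻¹ ≤ P (D k) := by
    intro k
    have hlaw := hWlaw (ts k) (ts (Fin.last n)) (hts0 k) (hmono (Fin.le_last k))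
    have heq : P (D k) = (gaussianReal 0 ((ts (Fin.last n) - ts k).toNNReal)) (Set.Iic 0) := by
      rw [← hlaw, Measure.map_apply (f := fun ω => W (ts (Fin.last n)) ω - W (ts k) ω) ((hWmeas _).sub (hWmeas _)) measurableSet_Iic]
      rfl
    rw [heq]
    exact gaussian_half _
  have hkey : ∀ k, P (B k) ≤ 2 * P (B k ∩ D k) := by
    intro k
    set S : Finset (Fin n) := Finset.univ.filter (fun i => (i:ℕ) < (k:ℕ)) with hS
    set T : Finset (Fin n) := Finset.univ.filter (fun i => ¬ (i:ℕ) < (k:ℕ)) with hT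
    have hST : Disjoint S T := by
      rw [Finset.disjoint_left]
      intro i hi hj
      simp only [hS, hT, Finset.mem_filter, Finset.mem_univ, true_and] at hi hj
      exact hj hi
    have hIF := hXind.indepFun_finset S T hST hXmeas
    set g : Fin (n+1) → ((i : S) → ℝ) → ℝ :=
      fun j u => ∑ i : S, if ((i : Fin n) : ℕ) < (j:ℕ) then u i else 0 with hg
    have hgmeas : ∀ j, Measurable (g j) := by
      intro j
      apply Finset.measurable_sum
      intro i _
      by_cases h : ((i : Fin n) : ℕ) < (j:ℕ)
      · simpa [h] using measurable_pi_apply i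
      · simpa [h] using @measurable_const ℝ _ _ _ 0
    have hgrep : ∀ (j : Fin (n+1)), j ≤ k → ∀ ω, g j (fun i : S => X i ω) = W (ts j) ω := by
      intro j hj ω
      rw [hrep j ω, hg]
      simp only []
      rw [Finset.sum_coe_sort S (fun i => if (i:ℕ) < (j:ℕ) then X i ω else 0),
        ← Finset.sum_filter]
      congr 1
      rw [hS, Finset.filter_filter]
      ext i
      simp only [Finset.mem_filter, Finset.mem_univ, true_and]
      have hjk := Fin.le_def.mp hj
      omega
    set MS : Set ((i : S) → ℝ) :=
      {u | g k u ≤ -c} \ ⋃ (j : Fin (n+1)) (_ : j < k), {u | g j u ≤ -c} with hMS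
    have hMSmeas : MeasurableSet MS :=
      (measurableSet_le (hgmeas k) measurable_const).diff
        (MeasurableSet.iUnion fun j => MeasurableSet.iUnion fun _ =>
          measurableSet_le (hgmeas j) measurable_const)
    have hBpre : B k = (fun ω (i : S) => X i ω) ⁻¹' MS := by
      ext ω
      simp only [hB, hMS, hE, Set.mem_diff, Set.mem_setOf_eq, Set.mem_preimage, Set.mem_iUnion,
        not_exists]
      constructor
      · rintro ⟨h1, h2⟩
        refine ⟨by rw [hgrep k le_rfl ω]; exact h1, fun j hj hle => ?_⟩
        exact h2 j hj (by rwa [hgrep j hj.le ω] at hle)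
      · rintro ⟨h1, h2⟩
        refine ⟨by rw [← hgrep k le_rfl ω]; exact h1, fun j hj hle => ?_⟩
        exact h2 j hj (by rwa [← hgrep j hj.le ω] at hle)
    have hTuniv : Finset.univ.filter (fun i : Fin n => (i:ℕ) < ((Fin.last n : Fin (n+1)):ℕ))
        = Finset.univ := by
      ext i
      simp [i.isLt]
    have hsumT : ∀ ω, (∑ i : T, X i ω) = W (ts (Fin.last n)) ω - W (ts k) ω := by
      intro ω
      rw [hrep (Fin.last n) ω, hrep k ω, hTuniv,
        Finset.sum_coe_sort T (fun i => X i ω),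
        ← Finset.sum_filter_add_sum_filter_not Finset.univ
          (fun i : Fin n => (i:ℕ) < (k:ℕ)) (fun i => X i ω)]
      rw [← hS, ← hT]
      ring
    have hDpre : D k = (fun ω (i : T) => X i ω) ⁻¹' {u | (∑ i : T, u i) ≤ 0} := by
      ext ω
      simp only [hD, Set.mem_setOf_eq, Set.mem_preimage, hsumT ω]
    have hNmeas : MeasurableSet {u : (i : T) → ℝ | (∑ i : T, u i) ≤ 0} :=
      measurableSet_le (Finset.measurable_sum _ (fun i _ => measurable_pi_apply i))
        measurable_const
    have hindep : P (B k ∩ D k) = P (B k) * P (D k) := by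
      rw [hBpre, hDpre]
      exact hIF.measure_inter_preimage_eq_mul MS _ hMSmeas hNmeas
    calc P (B k) = 2 * ((2:ENNReal)⁻¹ * P (B k)) := by
          rw [← mul_assoc, ENNReal.mul_inv_cancel (by norm_num) (by norm_num), one_mul]
      _ ≤ 2 * (P (D k) * P (B k)) := by gcongr; exact hDhalf k
      _ = 2 * P (B k ∩ D k) := by rw [hindep]; ring
  have hsub : (⋃ k, B k ∩ D k) ⊆ E (Fin.last n) := by
    rintro ω hω
    simp only [Set.mem_iUnion] at hω
    obtain ⟨k, hBk, hDk⟩ := hω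
    have h1 : W (ts k) ω ≤ -c := hBk.1
    have h2 : W (ts (Fin.last n)) ω - W (ts k) ω ≤ 0 := hDk
    show W (ts (Fin.last n)) ω ≤ -c
    linarith
  calc P (⋃ k, E k) ≤ P (⋃ k, B k) := measure_mono hUnion
    _ = ∑' k, P (B k) := measure_iUnion hdisj hBmeas
    _ ≤ ∑' k, 2 * P (B k ∩ D k) := ENNReal.tsum_le_tsum hkey
    _ = 2 * ∑' k, P (B k ∩ D k) := ENNReal.tsum_mul_left
    _ = 2 * P (⋃ k, B k ∩ D k) := by
        rw [measure_iUnion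
          (fun a b hab => ((hdisj hab).mono Set.inter_subset_left Set.inter_subset_left))
          (fun k => (hBmeas k).inter (hDmeas k))]
    _ ≤ 2 * P (E (Fin.last n)) := mul_le_mul_right (measure_mono hsub) 2

lemma ode_exit (Q₀ α T : ℝ) (hQ : 0 < Q₀) (hα : 0 < α) (hT : 0 < T)
    (f w : ℝ → ℝ) (hf : Continuous f) (hw : Continuous w)
    (heq : ∀ t ≥ (0:ℝ), f t = Q₀ + (∫ s in (0:ℝ)..t, α * f s) + w t)
    (hlt : ∀ t ∈ Set.Icc (0:ℝ) T, f t < 2 * Q₀) :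
    ∃ s ∈ Set.Icc (0:ℝ) T, w s ≤ -((1 - 2*Real.exp (-(α*T))) * Q₀) := by
  by_contra hcon
  push_neg at hcon
  set a : ℝ := 1 - 2*Real.exp (-(α*T)) with ha
  set F : ℝ → ℝ := fun t => ∫ s in (0:ℝ)..t, f s with hF
  have hFder : ∀ t : ℝ, HasDerivAt F (f t) t := fun t =>
    intervalIntegral.integral_hasDerivAt_right (hf.intervalIntegrable 0 t)
      hf.stronglyMeasurable.stronglyMeasurableAtFilter hf.continuousAt
  have heq' : ∀ t ≥ (0:ℝ), f t = Q₀ + α * F t + w t := by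
    intro t ht
    have := heq t ht
    rwa [intervalIntegral.integral_const_mul] at this
  set g : ℝ → ℝ := fun t => Real.exp (-(α*t)) * (Q₀ + α * F t) with hg
  have hexpder : ∀ t : ℝ, HasDerivAt (fun u : ℝ => Real.exp (-(α*u)))
      (Real.exp (-(α*t)) * (-α)) t := by
    intro t
    have h1 : HasDerivAt (fun u : ℝ => -(α*u)) (-α) t := by
      exact (by simpa using ((hasDerivAt_id t).const_mul α).neg : HasDerivAt (-fun y : ℝ => α * y) (-α) t)
    exact h1.exp
  have hder : ∀ t ∈ Set.Icc (0:ℝ) T, HasDerivAt g (α * Real.exp (-(α*t)) * w t) t := by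
    intro t ht
    have h3 : HasDerivAt (fun u => Q₀ + α * F u) (α * f t) t :=
      ((hFder t).const_mul α).const_add Q₀
    have h4 := (hexpder t).mul h3
    refine h4.congr_deriv ?_
    have h5 := heq' t ht.1
    have h6 : Q₀ + α * F t = f t - w t := by linarith
    rw [h6]
    ring
  have hFTC : ∫ t in (0:ℝ)..T, α * Real.exp (-(α*t)) * w t = g T - g 0 := by
    apply intervalIntegral.integral_eq_sub_of_hasDerivAt
    · intro t ht
      rw [Set.uIcc_of_le hT.le] at ht
      exact hder t ht
    · apply Continuous.intervalIntegrable
      exact (continuous_const.mul (Real.continuous_exp.comp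
        ((continuous_const.mul continuous_id).neg))).mul hw
  have hg0 : g 0 = Q₀ := by
    simp [hg, hF, intervalIntegral.integral_same]
  have hexpint : ∫ t in (0:ℝ)..T, α * Real.exp (-(α*t)) = 1 - Real.exp (-(α*T)) := by
    have hd : ∀ t ∈ Set.uIcc (0:ℝ) T, HasDerivAt (fun u : ℝ => -Real.exp (-(α*u)))
        (α * Real.exp (-(α*t))) t := by
      intro t _
      have := (hexpder t).neg
      refine this.congr_deriv ?_
      ring
    have := intervalIntegral.integral_eq_sub_of_hasDerivAt hd
      (Continuous.intervalIntegrable (continuous_const.mul (Real.continuous_exp.comp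
        ((continuous_const.mul continuous_id).neg))) _ _)
    rw [this]
    simp only [mul_zero, neg_zero, Real.exp_zero]
    ring
  have hmono : ∫ t in (0:ℝ)..T, α * Real.exp (-(α*t)) * (-(a * Q₀))
      ≤ ∫ t in (0:ℝ)..T, α * Real.exp (-(α*t)) * w t := by
    apply intervalIntegral.integral_mono_on hT.le
    · apply Continuous.intervalIntegrable
      exact (continuous_const.mul (Real.continuous_exp.comp
        ((continuous_const.mul continuous_id).neg))).mul continuous_const
    · apply Continuous.intervalIntegrable
      exact (continuous_const.mul (Real.continuous_exp.comp
        ((continuous_const.mul continuous_id).neg))).mul hw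
    · intro x hx
      have := hcon x hx
      have hpos : 0 ≤ α * Real.exp (-(α*x)) := by positivity
      nlinarith
  have hconstint : ∫ t in (0:ℝ)..T, α * Real.exp (-(α*t)) * (-(a * Q₀))
      = (1 - Real.exp (-(α*T))) * (-(a * Q₀)) := by
    rw [intervalIntegral.integral_mul_const, hexpint]
  have hgT : Q₀ + (1 - Real.exp (-(α*T))) * (-(a * Q₀)) ≤ g T := by
    have := hmono
    rw [hconstint, hFTC, hg0] at this
    linarith
  -- contradiction at t = T
  have hfT := heq' T hT.le
  have hwT := hcon T ⟨hT.le, le_rfl⟩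
  have hltT := hlt T ⟨hT.le, le_rfl⟩
  have hprod : Real.exp (-(α*T)) * Real.exp (α*T) = 1 := by
    rw [← Real.exp_add]
    simp
  have hgTval : Q₀ + α * F T = g T * Real.exp (α*T) := by
    rw [hg]
    simp only []
    rw [mul_right_comm, hprod, one_mul]
  have hexpTpos : (0:ℝ) < Real.exp (α*T) := Real.exp_pos _
  have hkey : (Q₀ + (1 - Real.exp (-(α*T))) * (-(a * Q₀))) * Real.exp (α*T)
      ≤ g T * Real.exp (α*T) := by
    exact mul_le_mul_of_nonneg_right hgT hexpTpos.le
  rw [ha] at hkey hwT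
  have hexpand : (Q₀ + (1 - Real.exp (-(α*T))) * (-((1 - 2*Real.exp (-(α*T))) * Q₀)))
      * Real.exp (α*T)
      = (3 - 2*Real.exp (-(α*T))) * Q₀ * (Real.exp (-(α*T)) * Real.exp (α*T)) := by ring
  rw [hexpand, hprod, mul_one, ← hgTval] at hkey
  linarith

lemma running_min_tail {Ω : Type} [MeasurableSpace Ω] (P : Measure Ω) [IsProbabilityMeasure P]
    (W : ℝ → Ω → ℝ) (hW : IsStandardBrownianMotion P W)
    (T : ℝ) (hT : 0 < T) (b : ℝ) (hb : 0 < b) :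
    P {ω | ∃ s ∈ Set.Icc (0:ℝ) T, W s ω ≤ -b}
      ≤ ENNReal.ofReal (2 * Real.exp (-b^2 / (2*T))) := by
  classical
  obtain ⟨hW0, hWcont, hWmeas, hWlaw, hWind⟩ := hW
  obtain ⟨f, hf⟩ := exists_surjective_nat ℚ
  -- countable dense family of times in [0, T], containing T
  set d : ℕ → ℝ := fun m => match m with
    | 0 => T
    | m+1 => max 0 (min T ((f m : ℚ) : ℝ)) with hd
  have hdmem : ∀ m, d m ∈ Set.Icc (0:ℝ) T := by
    intro m
    match m with
    | 0 => exact ⟨hT.le, le_rfl⟩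
    | m+1 =>
      constructor
      · exact le_max_left _ _
      · exact max_le hT.le (min_le_left _ _)
  have hdense : ∀ s ∈ Set.Icc (0:ℝ) T, ∀ δ > (0:ℝ), ∃ m, |d m - s| < δ := by
    intro s hs δ hδ
    obtain ⟨r, hr⟩ := exists_rat_near s hδ
    obtain ⟨m, rfl⟩ := hf r
    refine ⟨m + 1, ?_⟩
    rw [abs_sub_lt_iff] at hr ⊢
    have hrd : d (m + 1) = max 0 (min T ((f m : ℚ) : ℝ)) := rfl
    rw [hrd]
    constructor
    · -- max 0 (min T r) - s < δ
      have h1 : min T ((f m : ℚ):ℝ) ≤ ((f m : ℚ):ℝ) := min_le_right _ _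
      have h2 : max 0 (min T ((f m : ℚ):ℝ)) < s + δ :=
        max_lt (by linarith [hs.1]) (lt_of_le_of_lt h1 (by linarith [hr.1]))
      linarith
    · -- s - max 0 (min T r) < δ
      have h1 : s - δ < min T ((f m : ℚ):ℝ) := lt_min (by linarith [hs.2]) (by linarith [hr.2])
      have h2 : min T ((f m : ℚ):ℝ) ≤ max 0 (min T ((f m : ℚ):ℝ)) := le_max_right _ _
      linarith
  have hWT : ∀ (cc : ℝ), 0 ≤ cc → P {ω | W T ω ≤ -cc} ≤ ENNReal.ofReal (Real.exp (-cc^2 / (2*T))) := by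
    intro cc hcc
    have hmap : P {ω | W T ω ≤ -cc} = gaussianReal 0 ((T - 0).toNNReal) (Set.Iic (-cc)) := by
      rw [← hWlaw 0 T le_rfl hT.le, Measure.map_apply (f := fun ω => W T ω - W 0 ω) ((hWmeas T).sub (hWmeas 0)) measurableSet_Iic]
      congr 1
      ext ω
      simp [hW0 ω]
    rw [hmap]
    refine (gaussian_tail _ ?_ cc hcc).trans (le_of_eq ?_)
    · simp only [sub_zero, ne_eq, Real.toNNReal_eq_zero, not_le]
      exact hT
    · congr 2
      simp [Real.coe_toNNReal _ hT.le]
  have main : ∀ ε : ℝ, 0 < ε → ε < b →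
      P {ω | ∃ s ∈ Set.Icc (0:ℝ) T, W s ω ≤ -b}
        ≤ ENNReal.ofReal (2 * Real.exp (-(b-ε)^2 / (2*T))) := by
    intro ε hε hεb
    set A : ℕ → Set Ω := fun m => {ω | W (d m) ω ≤ -(b-ε)} with hA
    have hAmeas : ∀ m, MeasurableSet (A m) :=
      fun m => measurableSet_le (hWmeas _) measurable_const
    have hsub : {ω | ∃ s ∈ Set.Icc (0:ℝ) T, W s ω ≤ -b} ⊆ ⋃ m, A m := by
      rintro ω ⟨s, hs, hws⟩
      have hc : ContinuousAt (fun t => W t ω) s := (hWcont ω).continuousAt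
      rw [Metric.continuousAt_iff] at hc
      obtain ⟨δ, hδ, hball⟩ := hc ε hε
      obtain ⟨m, hm⟩ := hdense s hs δ hδ
      refine Set.mem_iUnion.2 ⟨m, ?_⟩
      have := hball (show dist (d m) s < δ by rwa [Real.dist_eq])
      rw [Real.dist_eq, abs_sub_lt_iff] at this
      show W (d m) ω ≤ -(b - ε)
      linarith [this.1]
    set Bn : ℕ → Set Ω := fun N => ⋃ m ∈ Finset.range (N+1), A m with hBn
    have hBmono : Monotone Bn := by
      intro N M hNM ω hω
      simp only [hBn, Set.mem_iUnion] at hω ⊢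
      obtain ⟨m, hm, h⟩ := hω
      refine ⟨m, ?_, h⟩
      simp only [Finset.mem_range] at hm ⊢
      omega
    have hcup : ⋃ m, A m ⊆ ⋃ N, Bn N := by
      intro ω hω
      obtain ⟨m, hm⟩ := Set.mem_iUnion.1 hω
      exact Set.mem_iUnion.2 ⟨m, Set.mem_iUnion₂.mpr ⟨m, Finset.self_mem_range_succ m, hm⟩⟩
    have hboundN : ∀ N, P (Bn N) ≤ ENNReal.ofReal (2 * Real.exp (-(b-ε)^2 / (2*T))) := by
      intro N
      -- build sorted grid from the times d 0, ..., d N together with 0 and T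
      set F : Finset ℝ := ((Finset.range (N+1)).image d) ∪ {0, T} with hF
      have hF0 : (0:ℝ) ∈ F := by simp [hF]
      have hFT : T ∈ F := by simp [hF]
      have hFsub : ∀ x ∈ F, x ∈ Set.Icc (0:ℝ) T := by
        intro x hx
        simp only [hF, Finset.mem_union, Finset.mem_image, Finset.mem_range,
          Finset.mem_insert, Finset.mem_singleton] at hx
        rcases hx with ⟨m, _, rfl⟩ | rfl | rfl
        · exact hdmem m
        · exact ⟨le_rfl, hT.le⟩
        · exact ⟨hT.le, le_rfl⟩
      have hcardpos : 0 < F.card := Finset.card_pos.2 ⟨0, hF0⟩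
      set n : ℕ := F.card - 1 with hn
      have hcard : F.card = n + 1 := by omega
      set iso := F.orderIsoOfFin hcard with hiso
      set tsg : Fin (n+1) → ℝ := fun i => (iso i : ℝ) with htsg
      have htsmono : Monotone tsg := fun i j hij => by
        exact_mod_cast (iso.le_iff_le.2 hij)
      have htsmem : ∀ i, tsg i ∈ Set.Icc (0:ℝ) T := fun i => hFsub _ (iso i).2
      have hts0 : tsg 0 = 0 := by
        obtain ⟨j, hj⟩ := iso.surjective ⟨0, hF0⟩
        have h1 : tsg 0 ≤ tsg j := htsmono (Fin.zero_le j)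
        have h2 : tsg j = 0 := by simp only [htsg]; rw [hj]
        have h3 := (htsmem 0).1
        linarith [h1, h2 ▸ h1]
      have htslast : tsg (Fin.last n) = T := by
        obtain ⟨j, hj⟩ := iso.surjective ⟨T, hFT⟩
        have h1 : tsg j ≤ tsg (Fin.last n) := htsmono (Fin.le_last j)
        have h2 : tsg j = T := by simp only [htsg]; rw [hj]
        have h3 := (htsmem (Fin.last n)).2
        linarith
      have hgridsub : Bn N ⊆ ⋃ k, {ω | W (tsg k) ω ≤ -(b-ε)} := by
        intro ω hω
        simp only [hBn, Set.mem_iUnion] at hω ⊢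
        obtain ⟨m, hmN, hm⟩ := hω
        have hdm : d m ∈ F := by
          simp only [hF, Finset.mem_union, Finset.mem_image]
          exact Or.inl ⟨m, hmN, rfl⟩
        obtain ⟨k, hk⟩ := iso.surjective ⟨d m, hdm⟩
        refine ⟨k, ?_⟩
        show W (tsg k) ω ≤ -(b-ε)
        simp only [htsg]
        rw [hk]
        exact hm
      calc P (Bn N) ≤ P (⋃ k, {ω | W (tsg k) ω ≤ -(b-ε)}) := measure_mono hgridsub
        _ ≤ 2 * P {ω | W (tsg (Fin.last n)) ω ≤ -(b-ε)} :=
            discrete_reflection P W ⟨hW0, hWcont, hWmeas, hWlaw, hWind⟩ n tsg htsmono hts0 _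
        _ ≤ 2 * ENNReal.ofReal (Real.exp (-(b-ε)^2 / (2*T))) := by
            gcongr
            rw [htslast]
            exact hWT (b-ε) (by linarith)
        _ = ENNReal.ofReal (2 * Real.exp (-(b-ε)^2 / (2*T))) := by
            rw [ENNReal.ofReal_mul (by norm_num)]
            norm_num
    have htend := tendsto_measure_iUnion_atTop (μ := P) hBmono
    have hlim : P (⋃ N, Bn N) ≤ ENNReal.ofReal (2 * Real.exp (-(b-ε)^2 / (2*T))) :=
      le_of_tendsto' htend hboundN
    exact le_trans (measure_mono (hsub.trans hcup)) hlim
  -- let ε → 0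
  have htendf : Filter.Tendsto (fun ε : ℝ => ENNReal.ofReal (2 * Real.exp (-(b-ε)^2 / (2*T))))
      (nhdsWithin 0 (Set.Ioi 0)) (nhds (ENNReal.ofReal (2 * Real.exp (-b^2 / (2*T))))) := by
    apply Filter.Tendsto.mono_left _ nhdsWithin_le_nhds
    have hcont0 : Continuous fun ε : ℝ => 2 * Real.exp (-(b-ε)^2 / (2*T)) := by
      apply continuous_const.mul
      apply Real.continuous_exp.comp
      apply Continuous.div_const
      exact ((continuous_const.sub continuous_id).pow 2).neg
    have hcont : Continuous (fun ε : ℝ => ENNReal.ofReal (2 * Real.exp (-(b-ε)^2 / (2*T)))) :=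
      ENNReal.continuous_ofReal.comp hcont0
    have := hcont.tendsto 0
    simpa using this
  refine ge_of_tendsto htendf ?_
  filter_upwards [Ioo_mem_nhdsGT_of_mem (Set.mem_Ico.2 ⟨le_rfl, hb⟩)] with ε hε
  exact main ε hε.1 hε.2

end Aux

/-- For `dq = α q dt + dW`, `q(0) = Q₀ > 0`, `α > 0`, the probability that `q` stays
below `2Q₀` on `[0, 1/(ηα)]` is at most `C exp(-c_η Q₀² α)`. -/
theorem prob_stays_below_double :
    ∃ C > (0 : ℝ), ∀ η : ℝ, 0 < η → η < 1 / Real.log 2 → ∃ c > (0 : ℝ),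
      ∀ (Ω : Type) (_ : MeasurableSpace Ω) (P : Measure Ω), IsProbabilityMeasure P →
      ∀ (W : ℝ → Ω → ℝ), IsStandardBrownianMotion P W →
      ∀ (Q₀ α : ℝ), 0 < Q₀ → 0 < α →
      ∀ (q : ℝ → Ω → ℝ), (∀ t, Measurable (q t)) → (∀ ω, Continuous fun t => q t ω) →
      (∀ ω, ∀ t ≥ (0 : ℝ), q t ω = Q₀ + (∫ s in (0 : ℝ)..t, α * q s ω) + W t ω) →
      P {ω | ∀ t ∈ Set.Icc (0 : ℝ) (1 / (η * α)), q t ω < 2 * Q₀}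
        ≤ ENNReal.ofReal (C * Real.exp (-(c * Q₀ ^ 2 * α))) := by
  refine ⟨2, by norm_num, ?_⟩
  intro η hη hηlog
  have hlog2 : (0:ℝ) < Real.log 2 := Real.log_pos (by norm_num)
  have hainv : Real.log 2 < 1/η := by
    rw [lt_div_iff₀ hη]
    rw [lt_div_iff₀ hlog2] at hηlog
    linarith
  have haηpos : 0 < 1 - 2*Real.exp (-(1/η)) := by
    have h1 : Real.exp (-(1/η)) < Real.exp (-(Real.log 2)) := Real.exp_lt_exp.2 (by linarith)
    have h2 : Real.exp (-(Real.log 2)) = 1/2 := by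
      rw [Real.exp_neg, Real.exp_log] <;> norm_num
    rw [h2] at h1
    linarith
  refine ⟨η * (1 - 2*Real.exp (-(1/η)))^2 / 2, by positivity, ?_⟩
  intro Ω mΩ P hP W hW Q₀ α hQ hα q hqmeas hqcont hqeq
  haveI := hP
  have hTpos : 0 < 1 / (η * α) := by positivity
  have hαT : α * (1 / (η * α)) = 1/η := by field_simp
  have hsub : {ω | ∀ t ∈ Set.Icc (0:ℝ) (1 / (η * α)), q t ω < 2 * Q₀}
      ⊆ {ω | ∃ s ∈ Set.Icc (0:ℝ) (1 / (η * α)),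
          W s ω ≤ -((1 - 2*Real.exp (-(1/η))) * Q₀)} := by
    intro ω hω
    have h := ode_exit Q₀ α (1 / (η * α)) hQ hα hTpos (fun t => q t ω) (fun t => W t ω)
      (hqcont ω) (hW.2.1 ω) (hqeq ω) hω
    rwa [hαT] at h
  have hb : 0 < (1 - 2*Real.exp (-(1/η))) * Q₀ := by positivity
  calc P {ω | ∀ t ∈ Set.Icc (0:ℝ) (1 / (η * α)), q t ω < 2 * Q₀}
      ≤ P {ω | ∃ s ∈ Set.Icc (0:ℝ) (1 / (η * α)),
          W s ω ≤ -((1 - 2*Real.exp (-(1/η))) * Q₀)} := measure_mono hsub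
    _ ≤ ENNReal.ofReal (2 * Real.exp
          (-((1 - 2*Real.exp (-(1/η))) * Q₀)^2 / (2 * (1 / (η * α))))) :=
        running_min_tail P W hW _ hTpos _ hb
    _ = ENNReal.ofReal (2 * Real.exp
          (-(η * (1 - 2*Real.exp (-(1/η)))^2 / 2 * Q₀ ^ 2 * α))) := by
        congr 3
        field_simp
end

section
/- Let Q₀ > 0, α < 0, T̂ > 0 and let q solve dq(t) = αq(t)dt + dW(t), q(0) = Q₀. Then there exist constants C_{T̂} > 0 (depending only on T̂) and an absolute constant c > 0 such that Prob[ ∃ t ∈ [0, T̂] : |q(t)| ≥ 2Q₀ ] ≤ C_{T̂}·(1 + Q₀^{-2})·exp(−c·Q₀²·|α|). -/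
open MeasureTheory ProbabilityTheory Real

lemma gauss_tail (v : NNReal) {a L : ℝ} (ha : 0 < a) (hL : 0 < L) (hvL : (v : ℝ) ≤ L) :
    gaussianReal 0 v {x : ℝ | a ≤ |x|} ≤ ENNReal.ofReal (4 * Real.exp (-a ^ 2 / (4 * L))) := by
  have hmset : MeasurableSet {x : ℝ | a ≤ |x|} := by
    have : {x : ℝ | a ≤ |x|} = (fun x : ℝ => |x|) ⁻¹' Set.Ici a := rfl
    rw [this]; exact (measurable_abs) measurableSet_Ici
  rcases eq_or_ne v 0 with hv | hv
  · subst hv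
    rw [gaussianReal_zero_var]
    rw [Measure.dirac_apply' _ hmset]
    simp only [Set.indicator, Set.mem_setOf_eq, abs_zero]
    rw [if_neg (by linarith)]
    positivity
  · have hv0 : (0:ℝ) < (v:ℝ) := lt_of_le_of_ne (v.coe_nonneg) (by exact_mod_cast (Ne.symm hv))
    rw [gaussianReal_apply_eq_integral _ hv]
    apply ENNReal.ofReal_le_ofReal
    -- the dominating function
    set g : ℝ → ℝ := fun x => (Real.sqrt (2 * π * v))⁻¹ *
        (Real.exp (-a^2/(4*v)) * (Real.exp (-(x-a)^2/(4*v)) + Real.exp (-(x+a)^2/(4*v)))) with hg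
    have hgint : Integrable g := by
      have h1 : Integrable (fun x : ℝ => Real.exp (-(4*(v:ℝ))⁻¹ * x^2)) :=
        integrable_exp_neg_mul_sq (by positivity)
      have h2 : Integrable (fun x : ℝ => Real.exp (-(x-a)^2/(4*v))) := by
        have h := h1.comp_sub_right a
        have he : (fun t : ℝ => Real.exp (-(4*(v:ℝ))⁻¹ * (t - a)^2))
            = fun x : ℝ => Real.exp (-(x-a)^2/(4*v)) := by
          funext x; congr 1; field_simp
        rwa [he] at h
      have h3 : Integrable (fun x : ℝ => Real.exp (-(x+a)^2/(4*v))) := by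
        have h := h1.comp_add_right a
        have he : (fun t : ℝ => Real.exp (-(4*(v:ℝ))⁻¹ * (t + a)^2))
            = fun x : ℝ => Real.exp (-(x+a)^2/(4*v)) := by
          funext x; congr 1; field_simp
        rwa [he] at h
      exact ((h2.add h3).const_mul _).const_mul _
    have hbound : ∀ x ∈ {x : ℝ | a ≤ |x|}, gaussianPDFReal 0 v x ≤ g x := by
      intro x hx
      simp only [Set.mem_setOf_eq] at hx
      rw [gaussianPDFReal]
      simp only [sub_zero, hg]
      have h2v : (0:ℝ) < 2 * v := by positivity
      gcongr (Real.sqrt (2*π*v))⁻¹ * ?_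
      rcases le_or_gt a x with hxa | hxa
      · have key : Real.exp (-x^2/(2*v)) ≤ Real.exp (-a^2/(4*v)) * Real.exp (-(x-a)^2/(4*v)) := by
          rw [← Real.exp_add]
          apply Real.exp_le_exp.mpr
          rw [show -a^2/(4*(v:ℝ)) + -(x-a)^2/(4*(v:ℝ)) = (-(a^2)-(x-a)^2)/(4*(v:ℝ)) by ring,
            show -x^2/(2*(v:ℝ)) = (-(2*x^2))/(4*(v:ℝ)) by ring]
          gcongr
          nlinarith [sq_nonneg (x - a), mul_nonneg ha.le (sub_nonneg.2 hxa), sq_nonneg a]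
        calc Real.exp (-x^2/(2*v)) ≤ Real.exp (-a^2/(4*v)) * Real.exp (-(x-a)^2/(4*v)) := key
          _ ≤ Real.exp (-a^2/(4*v)) * (Real.exp (-(x-a)^2/(4*v)) + Real.exp (-(x+a)^2/(4*v))) := by
              have := Real.exp_pos (-(x+a)^2/(4*(v:ℝ)))
              nlinarith [Real.exp_pos (-a^2/(4*(v:ℝ)))]
      · have hxneg : x ≤ -a := by
          rcases abs_cases x with ⟨h1, h2⟩ | ⟨h1, h2⟩ <;> linarith
        have key : Real.exp (-x^2/(2*v)) ≤ Real.exp (-a^2/(4*v)) * Real.exp (-(x+a)^2/(4*v)) := by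
          rw [← Real.exp_add]
          apply Real.exp_le_exp.mpr
          rw [show -a^2/(4*(v:ℝ)) + -(x+a)^2/(4*(v:ℝ)) = (-(a^2)-(x+a)^2)/(4*(v:ℝ)) by ring,
            show -x^2/(2*(v:ℝ)) = (-(2*x^2))/(4*(v:ℝ)) by ring]
          gcongr
          nlinarith [sq_nonneg (x + a), mul_nonneg ha.le (by linarith : (0:ℝ) ≤ -(x+a)), sq_nonneg a]
        calc Real.exp (-x^2/(2*v)) ≤ Real.exp (-a^2/(4*v)) * Real.exp (-(x+a)^2/(4*v)) := key
          _ ≤ Real.exp (-a^2/(4*v)) * (Real.exp (-(x-a)^2/(4*v)) + Real.exp (-(x+a)^2/(4*v))) := by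
              nlinarith [Real.exp_pos (-a^2/(4*(v:ℝ))), Real.exp_pos (-(x-a)^2/(4*(v:ℝ)))]
    have hpdfint : IntegrableOn (gaussianPDFReal 0 v) {x : ℝ | a ≤ |x|} :=
      (integrable_gaussianPDFReal 0 v).integrableOn
    have step1 : ∫ x in {x : ℝ | a ≤ |x|}, gaussianPDFReal 0 v x ≤
        ∫ x in {x : ℝ | a ≤ |x|}, g x :=
      setIntegral_mono_on hpdfint hgint.integrableOn hmset hbound
    have hgnn : ∀ x, 0 ≤ g x := by
      intro x; rw [hg]; positivity
    have step2 : ∫ x in {x : ℝ | a ≤ |x|}, g x ≤ ∫ x, g x :=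
      setIntegral_le_integral hgint (Filter.Eventually.of_forall hgnn)
    have hI1 : ∫ x : ℝ, Real.exp (-(x-a)^2/(4*v)) = Real.sqrt (π / (4*(v:ℝ))⁻¹) := by
      have he : (fun x : ℝ => Real.exp (-(x-a)^2/(4*(v:ℝ))))
          = fun x : ℝ => (fun t : ℝ => Real.exp (-(4*(v:ℝ))⁻¹ * t^2)) (x - a) := by
        funext x; congr 1; field_simp
      rw [he, integral_sub_right_eq_self (fun t : ℝ => Real.exp (-(4*(v:ℝ))⁻¹ * t^2)) a,
        integral_gaussian]
    have hI2 : ∫ x : ℝ, Real.exp (-(x+a)^2/(4*v)) = Real.sqrt (π / (4*(v:ℝ))⁻¹) := by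
      have he : (fun x : ℝ => Real.exp (-(x+a)^2/(4*(v:ℝ))))
          = fun x : ℝ => (fun t : ℝ => Real.exp (-(4*(v:ℝ))⁻¹ * t^2)) (x + a) := by
        funext x; congr 1; field_simp
      rw [he, integral_add_right_eq_self (fun t : ℝ => Real.exp (-(4*(v:ℝ))⁻¹ * t^2)) a,
        integral_gaussian]
    have h2' : Integrable (fun x : ℝ => Real.exp (-(x-a)^2/(4*(v:ℝ)))) := by
      have h1 : Integrable (fun x : ℝ => Real.exp (-(4*(v:ℝ))⁻¹ * x^2)) :=
        integrable_exp_neg_mul_sq (by positivity)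
      have h := h1.comp_sub_right a
      have he : (fun t : ℝ => Real.exp (-(4*(v:ℝ))⁻¹ * (t - a)^2))
          = fun x : ℝ => Real.exp (-(x-a)^2/(4*v)) := by
        funext x; congr 1; field_simp
      rwa [he] at h
    have h3' : Integrable (fun x : ℝ => Real.exp (-(x+a)^2/(4*(v:ℝ)))) := by
      have h1 : Integrable (fun x : ℝ => Real.exp (-(4*(v:ℝ))⁻¹ * x^2)) :=
        integrable_exp_neg_mul_sq (by positivity)
      have h := h1.comp_add_right a
      have he : (fun t : ℝ => Real.exp (-(4*(v:ℝ))⁻¹ * (t + a)^2))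
          = fun x : ℝ => Real.exp (-(x+a)^2/(4*v)) := by
        funext x; congr 1; field_simp
      rwa [he] at h
    have hgval : ∫ x, g x = (Real.sqrt (2 * π * v))⁻¹ *
        (Real.exp (-a^2/(4*v)) * (2 * Real.sqrt (π / (4*(v:ℝ))⁻¹))) := by
      rw [hg]
      rw [integral_const_mul, integral_const_mul, integral_add h2' h3', hI1, hI2]
      ring
    have hsqrt : Real.sqrt (π / (4*(v:ℝ))⁻¹) = Real.sqrt 2 * Real.sqrt (2 * π * v) := by
      rw [← Real.sqrt_mul (by norm_num : (0:ℝ) ≤ 2)]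
      congr 1
      field_simp
      ring
    have hspos : 0 < Real.sqrt (2 * π * v) := Real.sqrt_pos.mpr (by positivity)
    have hval2 : ∫ x, g x = 2 * Real.sqrt 2 * Real.exp (-a^2/(4*v)) := by
      rw [hgval, hsqrt]
      field_simp
    have hsqrt2 : Real.sqrt 2 ≤ 2 := by
      nlinarith [Real.sq_sqrt (by norm_num : (0:ℝ) ≤ 2), Real.sqrt_nonneg 2]
    have hexp : Real.exp (-a^2/(4*v)) ≤ Real.exp (-a^2/(4*L)) := by
      apply Real.exp_le_exp.mpr
      rw [neg_div, neg_div, neg_le_neg_iff]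
      apply div_le_div_of_nonneg_left (by positivity) (by positivity) (by linarith)
    calc ∫ x in {x : ℝ | a ≤ |x|}, gaussianPDFReal 0 v x ≤ ∫ x, g x := le_trans step1 step2
      _ = 2 * Real.sqrt 2 * Real.exp (-a^2/(4*v)) := hval2
      _ ≤ 4 * Real.exp (-a^2/(4*L)) := by
          nlinarith [Real.exp_pos (-a^2/(4*(v:ℝ))), Real.exp_pos (-a^2/(4*L)),
            Real.sqrt_nonneg 2]

lemma bm_tail {Ω : Type} [MeasurableSpace Ω] {P : Measure Ω} {W : ℝ → Ω → ℝ}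
    (hW : IsStandardBrownianMotion P W) {s t L a : ℝ} (hs : 0 ≤ s) (hst : s ≤ t)
    (hL : 0 < L) (hvar : t - s ≤ L) (ha : 0 < a) :
    P {ω | a ≤ |W t ω - W s ω|} ≤ ENNReal.ofReal (4 * Real.exp (-a^2/(4*L))) := by
  have hmset : MeasurableSet {x : ℝ | a ≤ |x|} := by
    have : {x : ℝ | a ≤ |x|} = (fun x : ℝ => |x|) ⁻¹' Set.Ici a := rfl
    rw [this]; exact measurable_abs measurableSet_Ici
  have hf : Measurable (fun ω => W t ω - W s ω) := (hW.2.2.1 t).sub (hW.2.2.1 s)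
  have : {ω | a ≤ |W t ω - W s ω|} = (fun ω => W t ω - W s ω) ⁻¹' {x : ℝ | a ≤ |x|} := rfl
  rw [this, ← Measure.map_apply hf hmset, hW.2.2.2.1 s t hs hst]
  exact gauss_tail _ ha hL (by
    rw [Real.coe_toNNReal']
    exact max_le hvar hL.le)

lemma telescope_sum (w : ℝ → ℝ) (n : ℕ) (ts : Fin (n+1) → ℝ) :
    ∀ (j : ℕ) (hj : j ≤ n),
    w (ts ⟨j, Nat.lt_succ_of_le hj⟩) - w (ts 0) =
      ∑ i ∈ Finset.univ.filter (fun i : Fin n => (i : ℕ) < j),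
        (w (ts i.succ) - w (ts i.castSucc)) := by
  intro j
  induction j with
  | zero =>
    intro hj
    have : Finset.univ.filter (fun i : Fin n => (i : ℕ) < 0) = ∅ := by
      apply Finset.filter_false_of_mem; intro i _; omega
    rw [this, Finset.sum_empty]
    norm_num
  | succ j ih =>
    intro hj
    have hjn : j < n := hj
    have hfilter : Finset.univ.filter (fun i : Fin n => (i : ℕ) < j + 1) =
        insert ⟨j, hjn⟩ (Finset.univ.filter (fun i : Fin n => (i : ℕ) < j)) := by
      ext i
      simp only [Finset.mem_filter, Finset.mem_univ, true_and, Finset.mem_insert, Fin.ext_iff]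
      omega
    rw [hfilter, Finset.sum_insert (by simp)]
    rw [← ih (le_of_lt hjn)]
    have h1 : (⟨j, hjn⟩ : Fin n).succ = ⟨j + 1, Nat.lt_succ_of_le hj⟩ := rfl
    have h2 : (⟨j, hjn⟩ : Fin n).castSucc = ⟨j, Nat.lt_succ_of_le (le_of_lt hjn)⟩ := rfl
    rw [h1, h2]
    ring

lemma etemadi {Ω : Type} [MeasurableSpace Ω] {P : Measure Ω} [IsProbabilityMeasure P]
    {W : ℝ → Ω → ℝ} (hW : IsStandardBrownianMotion P W) (n : ℕ)
    (ts : Fin (n+1) → ℝ) (hmono : Monotone ts) (hpos : ∀ i, 0 ≤ ts i) {L b : ℝ}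
    (hL : 0 < L) (hb : 0 < b) (hrange : ts (Fin.last n) - ts 0 ≤ L) :
    P (⋃ k : Fin (n+1), {ω | 3*b ≤ |W (ts k) ω - W (ts 0) ω|}) ≤
      ENNReal.ofReal (8 * Real.exp (-b^2/(4*L))) := by
  classical
  set D : Fin (n+1) → Ω → ℝ := fun k ω => W (ts k) ω - W (ts 0) ω with hD
  have hDmeas : ∀ k, Measurable (D k) := fun k => (hW.2.2.1 _).sub (hW.2.2.1 _)
  set X : Fin n → Ω → ℝ := fun i ω => W (ts i.succ) ω - W (ts i.castSucc) ω with hX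
  have hXmeas : ∀ i, Measurable (X i) := fun i => (hW.2.2.1 _).sub (hW.2.2.1 _)
  have hiIndep := hW.2.2.2.2 n ts hmono hpos
  -- first-hitting decomposition
  set B : Fin (n+1) → Set Ω := fun k =>
    {ω | 3*b ≤ |D k ω|} ∩ ⋂ (j : Fin (n+1)) (_ : j < k), {ω | |D j ω| < 3*b} with hB
  have hBmeas : ∀ k, MeasurableSet (B k) := by
    intro k
    refine (measurableSet_le measurable_const (hDmeas k).abs).inter ?_
    exact MeasurableSet.iInter fun j => MeasurableSet.iInter fun _ =>
      measurableSet_lt (hDmeas j).abs measurable_const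
  have hdisj : Pairwise (Function.onFun Disjoint B) := by
    intro k k' hkk'
    rcases lt_or_gt_of_ne hkk' with h | h
    · rw [Function.onFun, Set.disjoint_left]
      rintro ω ⟨hk1, -⟩ ⟨-, hk2⟩
      have := Set.mem_iInter₂.mp hk2 k h
      simp only [Set.mem_setOf_eq] at this hk1
      linarith
    · rw [Function.onFun, Set.disjoint_left]
      rintro ω ⟨-, hk2⟩ ⟨hk1, -⟩
      have := Set.mem_iInter₂.mp hk2 k' h
      simp only [Set.mem_setOf_eq] at this hk1
      linarith
  have hUB : (⋃ k, {ω | 3*b ≤ |D k ω|}) ⊆ ⋃ k, B k := by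
    intro ω hω
    rw [Set.mem_iUnion] at hω
    obtain ⟨k, hk⟩ := hω
    have hne : (Finset.univ.filter (fun j : Fin (n+1) => 3*b ≤ |D j ω|)).Nonempty :=
      ⟨k, by simpa using hk⟩
    set k₀ := (Finset.univ.filter (fun j : Fin (n+1) => 3*b ≤ |D j ω|)).min' hne with hk₀
    refine Set.mem_iUnion.mpr ⟨k₀, ?_⟩
    constructor
    · have := Finset.min'_mem _ hne
      simpa using this
    · refine Set.mem_iInter₂.mpr fun j hj => ?_
      simp only [Set.mem_setOf_eq]
      by_contra hcon
      push_neg at hcon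
      have hjmem : j ∈ Finset.univ.filter (fun j : Fin (n+1) => 3*b ≤ |D j ω|) := by
        simp [hcon]
      exact absurd (Finset.min'_le _ _ hjmem) (not_le.mpr hj)
  set Dbar : Set Ω := {ω | b ≤ |D (Fin.last n) ω|} with hDbar
  have hDbarMeas : MeasurableSet Dbar := measurableSet_le measurable_const (hDmeas _).abs
  set C : Fin (n+1) → Set Ω := fun k => {ω | 2*b ≤ |W (ts (Fin.last n)) ω - W (ts k) ω|} with hC
  have hCmeas : ∀ k, MeasurableSet (C k) :=
    fun k => measurableSet_le measurable_const ((hW.2.2.1 _).sub (hW.2.2.1 _)).abs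
  -- B k covered
  have hcover : ∀ k, B k ⊆ (B k ∩ Dbar) ∪ (B k ∩ C k) := by
    intro k ω hω
    by_cases h : ω ∈ Dbar
    · exact Or.inl ⟨hω, h⟩
    · refine Or.inr ⟨hω, ?_⟩
      simp only [hDbar, Set.mem_setOf_eq, not_le] at h
      have hk1 : 3*b ≤ |D k ω| := hω.1
      simp only [hC, Set.mem_setOf_eq]
      have heq : W (ts (Fin.last n)) ω - W (ts k) ω = D (Fin.last n) ω - D k ω := by
        simp only [hD]; ring
      rw [heq]
      have h1 := abs_sub_abs_le_abs_sub (D k ω) (D (Fin.last n) ω)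
      have h2 : |D k ω - D (Fin.last n) ω| = |D (Fin.last n) ω - D k ω| := abs_sub_comm _ _
      linarith
  -- independence
  have hindep_step : ∀ k : Fin (n+1), P (B k ∩ C k) = P (B k) * P (C k) := by
    intro k
    set S : Set (Fin n) := {i | (i:ℕ) < (k:ℕ)} with hS
    set T : Set (Fin n) := {i | (k:ℕ) ≤ (i:ℕ)} with hT
    have hST : Disjoint S T := by
      rw [Set.disjoint_left]; intro i hi hi'
      simp only [hS, hT, Set.mem_setOf_eq] at hi hi'
      omega
    have h_le : ∀ i, MeasurableSpace.comap (X i) Real.measurableSpace ≤ _ := fun i =>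
      (hXmeas i).comap_le
    have hInd : Indep (⨆ i ∈ S, MeasurableSpace.comap (X i) Real.measurableSpace)
        (⨆ i ∈ T, MeasurableSpace.comap (X i) Real.measurableSpace) P :=
      indep_iSup_of_disjoint h_le hiIndep.iIndep hST
    have hset1 : ∀ c : ℝ, MeasurableSet {x : ℝ | c ≤ |x|} := fun c =>
      measurable_abs measurableSet_Ici
    have hset2 : ∀ c : ℝ, MeasurableSet {x : ℝ | |x| < c} := fun c =>
      measurable_abs measurableSet_Iio
    -- measurability of partial sums w.r.t. the sup sigma-algebras
    have hXm1 : ∀ i ∈ S, Measurable[⨆ i ∈ S, MeasurableSpace.comap (X i) Real.measurableSpace]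
        (X i) := by
      intro i hi
      rw [measurable_iff_comap_le]
      exact le_iSup₂ (f := fun (i : Fin n) (_ : i ∈ S) =>
        MeasurableSpace.comap (X i) Real.measurableSpace) i hi
    have hXm2 : ∀ i ∈ T, Measurable[⨆ i ∈ T, MeasurableSpace.comap (X i) Real.measurableSpace]
        (X i) := by
      intro i hi
      rw [measurable_iff_comap_le]
      exact le_iSup₂ (f := fun (i : Fin n) (_ : i ∈ T) =>
        MeasurableSpace.comap (X i) Real.measurableSpace) i hi
    have hDsum : ∀ (j : Fin (n+1)) (ω : Ω), D j ω =
        ∑ i ∈ Finset.univ.filter (fun i : Fin n => (i : ℕ) < (j:ℕ)),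
          X i ω := by
      intro j ω
      have := telescope_sum (fun t => W t ω) n ts (j : ℕ) (Nat.lt_succ_iff.mp j.isLt)
      simpa [hD, hX, Fin.eta] using this
    have hDm1 : ∀ j : Fin (n+1), (j : ℕ) ≤ (k : ℕ) →
        Measurable[⨆ i ∈ S, MeasurableSpace.comap (X i) Real.measurableSpace] (D j) := by
      intro j hj
      have : D j = fun ω => ∑ i ∈ Finset.univ.filter (fun i : Fin n => (i : ℕ) < (j:ℕ)),
          X i ω := funext fun ω => hDsum j ω
      rw [this]
      apply Finset.measurable_sum
      intro i hi
      simp only [Finset.mem_filter] at hi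
      exact hXm1 i (by simp only [hS, Set.mem_setOf_eq]; omega)
    have hBk1 : MeasurableSet[⨆ i ∈ S, MeasurableSpace.comap (X i) Real.measurableSpace]
        (B k) := by
      refine MeasurableSet.inter ?_ ?_
      · exact (hDm1 k le_rfl) (hset1 (3*b))
      · refine MeasurableSet.iInter fun j => MeasurableSet.iInter fun hj => ?_
        exact (hDm1 j (le_of_lt hj)) (hset2 (3*b))
    have hCk2 : MeasurableSet[⨆ i ∈ T, MeasurableSpace.comap (X i) Real.measurableSpace]
        (C k) := by
      have hsum : (fun ω => W (ts (Fin.last n)) ω - W (ts k) ω) =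
          fun ω => ∑ i ∈ Finset.univ.filter (fun i : Fin n => ¬ ((i : ℕ) < (k:ℕ))),
            X i ω := by
        funext ω
        have h1 := hDsum (Fin.last n) ω
        have h2 := hDsum k ω
        have h3 := Finset.sum_filter_add_sum_filter_not Finset.univ
          (fun i : Fin n => (i : ℕ) < (k:ℕ)) (fun i => X i ω)
        have h4 : Finset.univ.filter (fun i : Fin n => (i : ℕ) < ((Fin.last n : Fin (n+1)):ℕ))
            = Finset.univ := by
          apply Finset.filter_true_of_mem
          intro i _
          simpa using i.isLt
        have h5 : W (ts (Fin.last n)) ω - W (ts k) ω = D (Fin.last n) ω - D k ω := by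
          simp only [hD]; ring
        rw [h5, h1, h2, h4]
        linarith
      have hmeas : Measurable[⨆ i ∈ T, MeasurableSpace.comap (X i) Real.measurableSpace]
          (fun ω => W (ts (Fin.last n)) ω - W (ts k) ω) := by
        rw [hsum]
        apply Finset.measurable_sum
        intro i hi
        simp only [Finset.mem_filter] at hi
        exact hXm2 i (by simp only [hT, Set.mem_setOf_eq]; omega)
      exact hmeas (hset1 (2*b))
    exact (Indep_iff _ _ P).mp hInd (B k) (C k) hBk1 hCk2
  -- tail bounds
  set t2 : ENNReal := ENNReal.ofReal (4 * Real.exp (-b^2/(4*L))) with ht2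
  have htail1 : P Dbar ≤ t2 := by
    have := bm_tail hW (hpos 0) (hmono (Fin.zero_le _)) hL hrange hb
    exact this
  have htail2 : ∀ k, P (C k) ≤ t2 := by
    intro k
    have hvar : ts (Fin.last n) - ts k ≤ L := by
      have := hmono (Fin.zero_le k)
      linarith
    have := bm_tail hW (hpos k) (hmono (Fin.le_last k)) hL hvar
      (by linarith : (0:ℝ) < 2*b)
    refine le_trans this (ENNReal.ofReal_le_ofReal ?_)
    refine mul_le_mul_of_nonneg_left (Real.exp_le_exp.mpr ?_) (by norm_num)
    rw [neg_div, neg_div, neg_le_neg_iff]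
    have hb2 : b^2 ≤ (2*b)^2 := by nlinarith
    have := mul_le_mul_of_nonneg_right hb2 (by positivity : (0:ℝ) ≤ (4*L)⁻¹)
    simpa [div_eq_mul_inv] using this
  have hBDdisj : Pairwise (Function.onFun Disjoint (fun k => B k ∩ Dbar)) := by
    intro k k' h
    exact (hdisj h).mono Set.inter_subset_left Set.inter_subset_left
  have h1 : ∑ k : Fin (n+1), P (B k ∩ Dbar) ≤ P Dbar := by
    rw [← tsum_fintype (L := SummationFilter.unconditional _), ← measure_iUnion hBDdisj (fun k => (hBmeas k).inter hDbarMeas)]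
    exact measure_mono (Set.iUnion_subset fun k => Set.inter_subset_right)
  have hsumB : ∑ k : Fin (n+1), P (B k) ≤ 1 := by
    rw [← tsum_fintype (L := SummationFilter.unconditional _), ← measure_iUnion hdisj hBmeas]
    exact prob_le_one
  calc P (⋃ k, {ω | 3*b ≤ |D k ω|}) ≤ P (⋃ k, B k) := measure_mono hUB
    _ = ∑' k, P (B k) := measure_iUnion hdisj hBmeas
    _ = ∑ k : Fin (n+1), P (B k) := tsum_fintype _
    _ ≤ ∑ k : Fin (n+1), (P (B k ∩ Dbar) + P (B k ∩ C k)) :=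
        Finset.sum_le_sum fun k _ => (measure_mono (hcover k)).trans (measure_union_le _ _)
    _ = ∑ k : Fin (n+1), P (B k ∩ Dbar) + ∑ k : Fin (n+1), P (B k) * P (C k) := by
        rw [Finset.sum_add_distrib]
        congr 1
        exact Finset.sum_congr rfl fun k _ => hindep_step k
    _ ≤ P Dbar + ∑ k : Fin (n+1), P (B k) * t2 := by
        refine add_le_add h1 (Finset.sum_le_sum fun k _ => ?_)
        exact mul_le_mul_right (htail2 k) _
    _ ≤ t2 + (∑ k : Fin (n+1), P (B k)) * t2 := by
        rw [Finset.sum_mul]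
        exact add_le_add htail1 le_rfl
    _ ≤ t2 + 1 * t2 := add_le_add le_rfl (mul_le_mul_left hsumB _)
    _ = ENNReal.ofReal (8 * Real.exp (-b^2/(4*L))) := by
        rw [one_mul, ht2, ← ENNReal.ofReal_add (by positivity) (by positivity)]
        congr 1
        ring

lemma osc_bound {Ω : Type} [MeasurableSpace Ω] {P : Measure Ω} [IsProbabilityMeasure P]
    {W : ℝ → Ω → ℝ} (hW : IsStandardBrownianMotion P W) {u L b : ℝ}
    (hu : 0 ≤ u) (hL : 0 < L) (hb : 0 < b) :
    P {ω | ∃ t ∈ Set.Icc u (u+L), b ≤ |W t ω - W u ω|} ≤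
      ENNReal.ofReal (8 * Real.exp (-b^2/(144*L))) := by
  classical
  set A : ℚ → Set Ω := fun r =>
    {ω | (r:ℝ) ∈ Set.Icc u (u+L) ∧ b/2 ≤ |W r ω - W u ω|} with hA
  -- step 1 : rational approximation
  have hsub : {ω | ∃ t ∈ Set.Icc u (u+L), b ≤ |W t ω - W u ω|} ⊆ ⋃ r : ℚ, A r := by
    rintro ω ⟨t, htIcc, hbig⟩
    have hcont : ContinuousAt (fun x => W x ω) t := (hW.2.1 ω).continuousAt
    rw [Metric.continuousAt_iff] at hcont
    obtain ⟨δ, hδ, hδprop⟩ := hcont (b/2) (by linarith)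
    have hex : ∃ r : ℚ, (r:ℝ) ∈ Set.Icc u (u+L) ∧ |(r:ℝ) - t| < δ := by
      rcases lt_or_eq_of_le htIcc.2 with hlt | heq
      · obtain ⟨r, hr1, hr2⟩ := exists_rat_btwn (lt_min hlt (by linarith : t < t + δ))
        exact ⟨r, ⟨le_trans htIcc.1 hr1.le, (lt_min_iff.mp hr2).1.le⟩,
          abs_lt.mpr ⟨by linarith, by linarith [(lt_min_iff.mp hr2).2]⟩⟩
      · obtain ⟨r, hr1, hr2⟩ := exists_rat_btwn (max_lt (by linarith : u < t)
          (by linarith : t - δ < t))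
        refine ⟨r, ⟨(le_max_left u (t-δ)).trans hr1.le, by linarith [heq ▸ hr2.le]⟩,
          abs_lt.mpr ⟨by linarith [le_max_right u (t-δ), hr1], by linarith⟩⟩
    obtain ⟨r, hrIcc, hrd⟩ := hex
    refine Set.mem_iUnion.mpr ⟨r, hrIcc, ?_⟩
    have hwd : |W (r:ℝ) ω - W t ω| < b/2 := by
      have := hδprop (show dist (r:ℝ) t < δ by rwa [Real.dist_eq])
      rwa [Real.dist_eq] at this
    have habs := abs_sub_abs_le_abs_sub (W t ω - W u ω) (W (r:ℝ) ω - W u ω)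
    have h3 : |(W t ω - W u ω) - (W (r:ℝ) ω - W u ω)| = |W (r:ℝ) ω - W t ω| := by
      rw [← abs_neg]; congr 1; ring
    rw [h3] at habs
    linarith
  refine le_trans (measure_mono hsub) ?_
  -- step 2 : directed union over finite sets of rationals
  rw [Set.iUnion_eq_iUnion_finset A]
  have hdir : Directed (· ⊆ ·) (fun F : Finset ℚ => ⋃ r ∈ F, A r) := by
    intro F₁ F₂
    exact ⟨F₁ ∪ F₂, Set.biUnion_subset_biUnion_left (F₁.subset_union_left),
      Set.biUnion_subset_biUnion_left (F₁.subset_union_right)⟩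
  rw [hdir.measure_iUnion]
  refine iSup_le fun F => ?_
  -- step 3 : apply etemadi to the finite set
  set T : Finset ℝ := insert u ((F.image (fun q : ℚ => (q:ℝ))).filter
    (fun x => x ∈ Set.Icc u (u+L))) with hT
  have hTmem : ∀ x ∈ T, x ∈ Set.Icc u (u+L) := by
    intro x hx
    rcases Finset.mem_insert.mp hx with h | h
    · subst h; exact ⟨le_rfl, by linarith⟩
    · exact (Finset.mem_filter.mp h).2
  have hTu : u ∈ T := Finset.mem_insert_self _ _
  have hcard : T.card = (T.card - 1) + 1 :=
    (Nat.succ_pred_eq_of_pos (Finset.card_pos.mpr ⟨u, hTu⟩)).symm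
  set n := T.card - 1 with hn
  set ts : Fin (n+1) → ℝ := fun i => T.orderEmbOfFin hcard i with hts
  have hmono : Monotone ts := (T.orderEmbOfFin hcard).monotone
  have htsmem : ∀ i, ts i ∈ T := fun i => T.orderEmbOfFin_mem hcard i
  have hpos : ∀ i, 0 ≤ ts i := fun i => le_trans hu (hTmem _ (htsmem i)).1
  have hts0 : ts 0 = u := by
    rw [hts]
    have h0 := T.orderEmbOfFin_zero hcard (Nat.succ_pos n)
    have hmin : T.min' ⟨u, hTu⟩ = u :=
      le_antisymm (Finset.min'_le _ _ hTu) (Finset.le_min' _ _ _ fun x hx => (hTmem x hx).1)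
    simp only []
    rw [show ((0 : Fin (n+1)) : Fin (n+1)) = ⟨0, Nat.succ_pos n⟩ from rfl]
    rw [h0, hmin]
  have hrange : ts (Fin.last n) - ts 0 ≤ L := by
    rw [hts0]
    have := (hTmem _ (htsmem (Fin.last n))).2
    linarith
  have hetemadi := etemadi hW n ts hmono hpos hL (by linarith : (0:ℝ) < b/6) hrange
  have hsub2 : (⋃ r ∈ F, A r) ⊆ ⋃ k, {ω | 3*(b/6) ≤ |W (ts k) ω - W (ts 0) ω|} := by
    intro ω hω
    rw [Set.mem_iUnion₂] at hω
    obtain ⟨r, hrF, hrIcc, hrbig⟩ := hω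
    have hrT : (r:ℝ) ∈ T := by
      refine Finset.mem_insert.mpr (Or.inr ?_)
      exact Finset.mem_filter.mpr ⟨Finset.mem_image.mpr ⟨r, hrF, rfl⟩, hrIcc⟩
    have : (r:ℝ) ∈ Set.range ts := by
      rw [hts]
      have := T.range_orderEmbOfFin hcard
      rw [show (Set.range fun i => T.orderEmbOfFin hcard i) = Set.range (T.orderEmbOfFin hcard)
        from rfl, this]
      exact_mod_cast hrT
    obtain ⟨k, hk⟩ := this
    refine Set.mem_iUnion.mpr ⟨k, ?_⟩
    simp only [Set.mem_setOf_eq]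
    rw [hk, hts0, show 3*(b/6) = b/2 by ring]
    exact hrbig
  refine le_trans (measure_mono hsub2) (le_trans hetemadi (le_of_eq ?_))
  congr 2
  ring

lemma pathwise_pos {f w : ℝ → ℝ} {α Q₀ t₁ t₀ : ℝ} (hf : Continuous f)
    (hα : α < 0) (hQ : 0 < Q₀) (h01 : t₁ ≤ t₀)
    (hdiff : f t₀ - f t₁ = (∫ s in t₁..t₀, α * f s) + (w t₀ - w t₁))
    (hlow : ∀ t ∈ Set.Icc t₁ t₀, Q₀ ≤ f t)
    (h1 : f t₁ ≤ Q₀) (h0 : 2*Q₀ ≤ f t₀) :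
    Q₀ * (1 + (-α) * (t₀ - t₁)) ≤ w t₀ - w t₁ := by
  have hint : ∫ s in t₁..t₀, α * f s ≤ ∫ s in t₁..t₀, α * Q₀ :=
    intervalIntegral.integral_mono_on h01 ((continuous_const.mul hf).intervalIntegrable _ _)
      intervalIntegrable_const (fun x hx => by nlinarith [hlow x hx])
  rw [intervalIntegral.integral_const] at hint
  have : w t₀ - w t₁ = (f t₀ - f t₁) - ∫ s in t₁..t₀, α * f s := by linarith
  rw [this]
  simp only [smul_eq_mul] at hint
  nlinarith

lemma pathwise {f w : ℝ → ℝ} {α Q₀ That : ℝ} (hf : Continuous f) (hw0 : w 0 = 0)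
    (hα : α < 0) (hQ : 0 < Q₀) (hT : 0 < That)
    (heq : ∀ t, 0 ≤ t → f t = Q₀ + (∫ s in (0:ℝ)..t, α * f s) + w t)
    (tstar : ℝ) (hstar : tstar ∈ Set.Icc 0 That) (hbig : 2*Q₀ ≤ |f tstar|) :
    ∃ s t, 0 ≤ s ∧ s ≤ t ∧ t ≤ That ∧ Q₀ * (1 + (-α)*(t - s)) ≤ |w t - w s| := by
  have hf0 : f 0 = Q₀ := by
    have := heq 0 le_rfl
    rwa [intervalIntegral.integral_same, hw0, add_zero, add_zero] at this
  have hii : ∀ a b : ℝ, IntervalIntegrable (fun s => α * f s) MeasureTheory.volume a b :=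
    fun a b => (continuous_const.mul hf).intervalIntegrable _ _
  have hdiff : ∀ a b : ℝ, 0 ≤ a → 0 ≤ b →
      f b - f a = (∫ s in a..b, α * f s) + (w b - w a) := by
    intro a b ha hb
    have h1 := heq a ha
    have h2 := heq b hb
    have h3 : (∫ s in (0:ℝ)..b, α * f s) - (∫ s in (0:ℝ)..a, α * f s) =
        ∫ s in a..b, α * f s := intervalIntegral.integral_interval_sub_left (hii 0 b) (hii 0 a)
    rw [h1, h2]
    linarith
  -- first hitting time of |f| = 2Q₀
  set S : Set ℝ := Set.Icc 0 tstar ∩ {t | 2*Q₀ ≤ |f t|} with hS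
  have hSclosed : IsClosed S :=
    isClosed_Icc.inter (isClosed_le continuous_const hf.abs)
  have hSne : S.Nonempty := ⟨tstar, ⟨⟨hstar.1, le_rfl⟩, hbig⟩⟩
  have hSbdd : BddBelow S := ⟨0, fun x hx => hx.1.1⟩
  set t₀ : ℝ := sInf S with ht₀
  have ht₀S : t₀ ∈ S := hSclosed.csInf_mem hSne hSbdd
  have ht₀Icc : t₀ ∈ Set.Icc 0 tstar := ht₀S.1
  have ht₀big : 2*Q₀ ≤ |f t₀| := ht₀S.2
  -- last time before t₀ with |f| ≤ Q₀
  set T' : Set ℝ := Set.Icc 0 t₀ ∩ {t | |f t| ≤ Q₀} with hT'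
  have hT'closed : IsClosed T' :=
    isClosed_Icc.inter (isClosed_le hf.abs continuous_const)
  have hT'ne : T'.Nonempty := ⟨0, ⟨le_rfl, ht₀Icc.1⟩, by simp only [Set.mem_setOf_eq]; rw [hf0, abs_of_pos hQ]⟩
  have hT'bdd : BddAbove T' := ⟨t₀, fun x hx => hx.1.2⟩
  set t₁ : ℝ := sSup T' with ht₁
  have ht₁T' : t₁ ∈ T' := hT'closed.csSup_mem hT'ne hT'bdd
  have ht₁Icc : t₁ ∈ Set.Icc 0 t₀ := ht₁T'.1
  have ht₁small : |f t₁| ≤ Q₀ := ht₁T'.2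
  have ht₁lt : t₁ < t₀ := by
    rcases lt_or_eq_of_le ht₁Icc.2 with h | h
    · exact h
    · exfalso; rw [h] at ht₁small; linarith [ht₀big, abs_nonneg (f t₀)]
  have hmid : ∀ t, t₁ < t → t ≤ t₀ → Q₀ < |f t| := by
    intro t ht1 ht2
    by_contra hcon
    push_neg at hcon
    have : t ∈ T' := ⟨⟨le_trans ht₁Icc.1 (le_of_lt ht1), ht2⟩, hcon⟩
    exact absurd (le_csSup hT'bdd this) (not_le.mpr ht1)
  have hft₁ : Q₀ ≤ |f t₁| := by
    by_contra hcon
    push_neg at hcon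
    have hcont : ContinuousAt (fun x => |f x|) t₁ := (hf.abs).continuousAt
    rw [Metric.continuousAt_iff] at hcont
    obtain ⟨δ, hδ, hδp⟩ := hcont (Q₀ - |f t₁|) (by linarith)
    set t' := min (t₁ + δ/2) t₀ with ht'
    have ht'1 : t₁ < t' := lt_min (by linarith) ht₁lt
    have ht'2 : t' ≤ t₀ := min_le_right _ _
    have hd : dist t' t₁ < δ := by
      rw [Real.dist_eq, abs_of_nonneg (by linarith : (0:ℝ) ≤ t' - t₁)]
      have : t' ≤ t₁ + δ/2 := min_le_left _ _
      linarith
    have := hδp hd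
    rw [Real.dist_eq] at this
    have h2 := (abs_lt.mp this).2
    have h3 := hmid t' ht'1 ht'2
    linarith
  have hQle : ∀ t ∈ Set.Icc t₁ t₀, Q₀ ≤ |f t| := by
    intro t ht
    rcases lt_or_eq_of_le ht.1 with h | h
    · exact (hmid t h ht.2).le
    · rw [← h]; exact hft₁
  have ht₁0 : 0 ≤ t₁ := ht₁Icc.1
  have ht₀0 : 0 ≤ t₀ := ht₀Icc.1
  have hfne : ∀ t ∈ Set.Icc t₁ t₀, f t ≠ 0 := by
    intro t ht h0
    have := hQle t ht
    rw [h0, abs_zero] at this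
    linarith
  refine ⟨t₁, t₀, ht₁0, ht₁lt.le, le_trans ht₀Icc.2 hstar.2, ?_⟩
  have hdiff10 := hdiff t₁ t₀ ht₁0 ht₀0
  rcases lt_or_gt_of_ne (hfne t₁ ⟨le_rfl, ht₁lt.le⟩) with hneg | hpos
  · -- f t₁ < 0 : f stays negative on [t₁, t₀]
    have hsign : ∀ t ∈ Set.Icc t₁ t₀, f t < 0 := by
      intro t ht
      by_contra hcon
      push_neg at hcon
      have hcont : ContinuousOn f (Set.Icc t₁ t) :=
        hf.continuousOn
      have : (0:ℝ) ∈ Set.Icc (f t₁) (f t) := ⟨hneg.le, hcon⟩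
      obtain ⟨z, hz, hfz⟩ := intermediate_value_Icc ht.1 hcont this
      exact hfne z ⟨hz.1, le_trans hz.2 ht.2⟩ hfz
    have key : Q₀ * (1 + (-α)*(t₀ - t₁)) ≤ (-w t₀) - (-w t₁) := by
      apply pathwise_pos (f := fun t => -f t) (w := fun t => -w t) hf.neg hα hQ ht₁lt.le
      · have hnegint : (∫ s in t₁..t₀, α * (-f s)) = -(∫ s in t₁..t₀, α * f s) := by
          rw [← intervalIntegral.integral_neg]
          congr 1
          funext s
          ring
        simp only [hnegint]
        linarith
      · intro t ht
        have h1 := hQle t ht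
        have h2 := hsign t ht
        rw [abs_of_neg h2] at h1
        linarith
      · have := ht₁small
        rw [abs_of_neg hneg] at this
        linarith
      · have h1 := hQle t₀ ⟨ht₁lt.le, le_rfl⟩
        have h2 := hsign t₀ ⟨ht₁lt.le, le_rfl⟩
        rw [abs_of_neg h2] at ht₀big
        linarith
    have : (-w t₀) - (-w t₁) = -(w t₀ - w t₁) := by ring
    rw [this] at key
    exact le_trans key (neg_le_abs _)
  · -- f t₁ > 0 : f stays positive on [t₁, t₀]
    have hsign : ∀ t ∈ Set.Icc t₁ t₀, 0 < f t := by
      intro t ht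
      by_contra hcon
      push_neg at hcon
      have hcont : ContinuousOn f (Set.Icc t₁ t) := hf.continuousOn
      have : (0:ℝ) ∈ Set.Icc (f t) (f t₁) := ⟨hcon, hpos.le⟩
      obtain ⟨z, hz, hfz⟩ := intermediate_value_Icc' ht.1 hcont this
      exact hfne z ⟨hz.1, le_trans hz.2 ht.2⟩ hfz
    have key : Q₀ * (1 + (-α)*(t₀ - t₁)) ≤ w t₀ - w t₁ := by
      apply pathwise_pos hf hα hQ ht₁lt.le hdiff10
      · intro t ht
        have h1 := hQle t ht
        have h2 := hsign t ht
        rwa [abs_of_pos h2] at h1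
      · have := ht₁small
        rwa [abs_of_pos hpos] at this
      · have h2 := hsign t₀ ⟨ht₁lt.le, le_rfl⟩
        rwa [abs_of_pos h2] at ht₀big
    exact le_trans key (le_abs_self _)

set_option maxHeartbeats 2000000 in
/-- For `dq = α q dt + dW`, `q(0) = Q₀ > 0`, `α < 0`, the probability of reaching
`|q| ≥ 2Q₀` before time `T̂` is at most `C_{T̂} (1 + Q₀⁻²) exp(-c Q₀² |α|)`. -/
theorem prob_ever_doubles_neg_drift :
    ∃ c > (0 : ℝ), ∀ That : ℝ, 0 < That → ∃ C > (0 : ℝ),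
      ∀ (Ω : Type) (_ : MeasurableSpace Ω) (P : Measure Ω), IsProbabilityMeasure P →
      ∀ (W : ℝ → Ω → ℝ), IsStandardBrownianMotion P W →
      ∀ (Q₀ α : ℝ), 0 < Q₀ → α < 0 →
      ∀ (q : ℝ → Ω → ℝ), (∀ t, Measurable (q t)) → (∀ ω, Continuous fun t => q t ω) →
      (∀ ω, ∀ t ≥ (0 : ℝ), q t ω = Q₀ + (∫ s in (0 : ℝ)..t, α * q s ω) + W t ω) →
      P {ω | ∃ t ∈ Set.Icc (0 : ℝ) That, |q t ω| ≥ 2 * Q₀}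
        ≤ ENNReal.ofReal (C * (1 + Q₀ ^ (-2 : ℤ)) * Real.exp (-(c * Q₀ ^ 2 * |α|))) := by
  classical
  refine ⟨1/4608, by norm_num, ?_⟩
  intro That hThat
  refine ⟨73728 * That + 35, by positivity, ?_⟩
  intro Ω mΩ P hP W hW Q₀ α hQ hα q hqmeas hqcont hqeq
  set c : ℝ := 1/4608 with hc
  set C : ℝ := 73728 * That + 35 with hC
  have hα' : (0:ℝ) < -α := by linarith
  have habs : |α| = -α := abs_of_neg hα
  have hzpow : Q₀ ^ (-2 : ℤ) = (Q₀^2)⁻¹ := by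
    rw [zpow_neg]
    norm_cast
  have hzpow_pos : (0:ℝ) < Q₀ ^ (-2 : ℤ) := by rw [hzpow]; positivity
  have hx : c * Q₀^2 * |α| = Q₀^2 * (-α) / 4608 := by rw [habs, hc]; ring
  -- trivial case
  by_cases hsmall : Q₀^2 * (-α) ≤ 4608
  · refine le_trans prob_le_one ?_
    rw [ENNReal.one_le_ofReal]
    have h1 : Real.exp (-(c * Q₀^2 * |α|)) ≥ Real.exp (-1) := by
      apply Real.exp_le_exp.mpr
      rw [hx]
      linarith
    have h3 : Real.exp 1 ≤ 3 := le_trans Real.exp_one_lt_d9.le (by norm_num)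
    have h2 : (1/3:ℝ) ≤ Real.exp (-1) := by
      rw [Real.exp_neg, one_div]
      exact inv_anti₀ (Real.exp_pos 1) h3
    have hC35 : (35:ℝ) ≤ C := by rw [hC]; nlinarith
    have hfac : (35:ℝ) ≤ C * (1 + Q₀ ^ (-2:ℤ)) := by nlinarith
    have hexp : (1/3:ℝ) ≤ Real.exp (-(c * Q₀^2 * |α|)) := by linarith
    nlinarith [mul_le_mul hfac hexp (by norm_num) (by linarith : (0:ℝ) ≤ C * (1 + Q₀ ^ (-2:ℤ)))]
  push_neg at hsmall
  -- main case
  set δ : ℝ := (-α)⁻¹ with hδdef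
  have hδ : (0:ℝ) < δ := by rw [hδdef]; positivity
  set N : ℕ := ⌈That * (-α)⌉₊ with hN
  set A2 : ℕ → ℕ → Set Ω := fun j m =>
    {ω | ∃ r ∈ Set.Icc ((j:ℝ)*δ) ((j:ℝ)*δ + (m:ℝ)*δ), Q₀*(m:ℝ)/4 ≤ |W r ω - W ((j:ℝ)*δ) ω|}
    with hA2
  -- pathwise inclusion into the grid events
  have hsub : {ω | ∃ t ∈ Set.Icc (0:ℝ) That, |q t ω| ≥ 2*Q₀} ⊆
      ⋃ j ∈ Finset.range (N+1), ⋃ m ∈ Finset.Icc 1 (N+1), A2 j m := by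
    rintro ω ⟨tstar, hstar, hbig⟩
    obtain ⟨s, t, h0s, hst, htT, hbound⟩ := pathwise (hqcont ω) (hW.1 ω) hα hQ hThat
      (hqeq ω) tstar hstar (by exact hbig)
    have h0t : 0 ≤ t := le_trans h0s hst
    set j : ℕ := ⌊s * (-α)⌋₊ with hj
    set k : ℕ := ⌊t * (-α)⌋₊ with hk
    have hjk : j ≤ k := Nat.floor_mono (by nlinarith)
    have hkN : k ≤ N := le_trans (Nat.floor_mono (by nlinarith)) (Nat.floor_le_ceil _)
    set m : ℕ := k - j + 1 with hm
    have hmcast : (m:ℝ) = (k:ℝ) - (j:ℝ) + 1 := by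
      rw [hm]
      push_cast [Nat.cast_sub hjk]
      ring
    have hδinv : (-α) * δ = 1 := by rw [hδdef]; field_simp; exact div_self hα.ne
    have hjs : (j:ℝ)*δ ≤ s := by
      have h1 : (j:ℝ) ≤ s * (-α) := Nat.floor_le (by nlinarith)
      calc (j:ℝ)*δ ≤ (s * (-α)) * δ := by nlinarith
        _ = s := by rw [mul_assoc, hδinv, mul_one]
    have hsj1 : s ≤ ((j:ℝ)+1)*δ := by
      have h1 : s * (-α) < (j:ℝ) + 1 := Nat.lt_floor_add_one _
      have := mul_le_mul_of_nonneg_right h1.le hδ.le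
      calc s = (s * (-α)) * δ := by rw [mul_assoc, hδinv, mul_one]
        _ ≤ ((j:ℝ)+1)*δ := this
    have htk : (k:ℝ)*δ ≤ t := by
      have h1 : (k:ℝ) ≤ t * (-α) := Nat.floor_le (by nlinarith)
      calc (k:ℝ)*δ ≤ (t * (-α)) * δ := by nlinarith
        _ = t := by rw [mul_assoc, hδinv, mul_one]
    have htk1 : t ≤ ((k:ℝ)+1)*δ := by
      have h1 : t * (-α) < (k:ℝ) + 1 := Nat.lt_floor_add_one _
      have := mul_le_mul_of_nonneg_right h1.le hδ.le
      calc t = (t * (-α)) * δ := by rw [mul_assoc, hδinv, mul_one]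
        _ ≤ ((k:ℝ)+1)*δ := this
    have hjkcast : (j:ℝ) ≤ (k:ℝ) := by exact_mod_cast hjk
    have hum : (j:ℝ)*δ + (m:ℝ)*δ = ((k:ℝ)+1)*δ := by rw [hmcast]; ring
    have hsIcc : s ∈ Set.Icc ((j:ℝ)*δ) ((j:ℝ)*δ + (m:ℝ)*δ) :=
      ⟨hjs, by rw [hum]; linarith⟩
    have htIcc : t ∈ Set.Icc ((j:ℝ)*δ) ((j:ℝ)*δ + (m:ℝ)*δ) := by
      constructor
      · calc (j:ℝ)*δ ≤ (k:ℝ)*δ := by nlinarith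
          _ ≤ t := htk
      · rw [hum]; exact htk1
    have hthresh : Q₀*(m:ℝ)/2 ≤ Q₀ * (1 + (-α)*(t - s)) := by
      rcases le_or_gt (m:ℝ) 2 with hm2 | hm2
      · have : (0:ℝ) ≤ (-α)*(t-s) := by nlinarith
        nlinarith
      · -- m ≥ 3 : t - s ≥ (m-2)δ
        have hts : t - s ≥ ((m:ℝ) - 2) * δ := by
          have : ((m:ℝ) - 2) * δ = (k:ℝ)*δ - ((j:ℝ)+1)*δ := by rw [hmcast]; ring
          rw [this]
          linarith
        have h1 : 1 + (-α)*(t-s) ≥ (m:ℝ) - 1 := by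
          have := mul_le_mul_of_nonneg_left hts hα'.le
          rw [show (-α) * (((m:ℝ)-2)*δ) = ((m:ℝ)-2) * ((-α)*δ) by ring, hδinv, mul_one] at this
          linarith
        nlinarith
    have hsplit : Q₀*(m:ℝ)/2 ≤ |W t ω - W ((j:ℝ)*δ) ω| + |W s ω - W ((j:ℝ)*δ) ω| := by
      have h1 : |W t ω - W s ω| ≤ |W t ω - W ((j:ℝ)*δ) ω| + |W s ω - W ((j:ℝ)*δ) ω| := by
        have := abs_sub (W t ω - W ((j:ℝ)*δ) ω) (W s ω - W ((j:ℝ)*δ) ω)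
        have heq : (W t ω - W ((j:ℝ)*δ) ω) - (W s ω - W ((j:ℝ)*δ) ω) = W t ω - W s ω := by ring
        rw [heq] at this
        exact this
      linarith
    have hmem : ω ∈ A2 j m := by
      rcases le_or_gt (Q₀*(m:ℝ)/4) (|W t ω - W ((j:ℝ)*δ) ω|) with h | h
      · exact ⟨t, htIcc, h⟩
      · exact ⟨s, hsIcc, by linarith⟩
    refine Set.mem_iUnion₂.mpr ⟨j, Finset.mem_range.mpr (by omega), ?_⟩
    exact Set.mem_iUnion₂.mpr ⟨m, Finset.mem_Icc.mpr ⟨by omega, by omega⟩, hmem⟩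
  -- probability bound for each grid event
  set γ : ℝ := Q₀^2 * (-α) / 2304 with hγ
  have hA2bound : ∀ j m : ℕ, 1 ≤ m →
      P (A2 j m) ≤ ENNReal.ofReal (8 * Real.exp (-γ * m)) := by
    intro j m hm1
    have hm0 : (0:ℝ) < (m:ℝ) := by exact_mod_cast hm1
    have hb : (0:ℝ) < Q₀*(m:ℝ)/4 := by positivity
    have hu : (0:ℝ) ≤ (j:ℝ)*δ := by positivity
    have hL : (0:ℝ) < (m:ℝ)*δ := by positivity
    have := osc_bound hW hu hL hb
    refine le_trans this (le_of_eq ?_)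
    congr 2
    rw [hγ, hδdef]
    have hαne : -α ≠ 0 := ne_of_gt hα'
    field_simp
    ring
  -- union bound
  refine le_trans (measure_mono hsub) ?_
  have hstep : P (⋃ j ∈ Finset.range (N+1), ⋃ m ∈ Finset.Icc 1 (N+1), A2 j m) ≤
      ∑ j ∈ Finset.range (N+1), ∑ m ∈ Finset.Icc 1 (N+1),
        ENNReal.ofReal (8 * Real.exp (-γ * m)) := by
    refine le_trans (measure_biUnion_finset_le _ _) (Finset.sum_le_sum fun j _ => ?_)
    refine le_trans (measure_biUnion_finset_le _ _) (Finset.sum_le_sum fun m hm => ?_)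
    exact hA2bound j m (Finset.mem_Icc.mp hm).1
  refine le_trans hstep ?_
  rw [show (∑ j ∈ Finset.range (N+1), ∑ m ∈ Finset.Icc 1 (N+1),
      ENNReal.ofReal (8 * Real.exp (-γ * m))) = (N+1) •
      ∑ m ∈ Finset.Icc 1 (N+1), ENNReal.ofReal (8 * Real.exp (-γ * m)) by
    rw [Finset.sum_const, Finset.card_range]]
  rw [← ENNReal.ofReal_sum_of_nonneg (fun m _ => by positivity)]
  rw [nsmul_eq_mul, ← ENNReal.ofReal_natCast (N+1),
    ← ENNReal.ofReal_mul (by positivity)]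
  apply ENNReal.ofReal_le_ofReal
  -- real arithmetic
  have hγ2 : (2:ℝ) ≤ γ := by rw [hγ]; linarith
  have hIcc_img : Finset.Icc 1 (N+1) = (Finset.range (N+1)).image (· + 1) := by
    ext i
    simp only [Finset.mem_Icc, Finset.mem_image, Finset.mem_range]
    constructor
    · rintro ⟨h1, h2⟩
      exact ⟨i - 1, by omega, by omega⟩
    · rintro ⟨a, ha, rfl⟩
      omega
  have hgeo : ∑ m ∈ Finset.Icc 1 (N+1), 8 * Real.exp (-γ * m) ≤ 16 * Real.exp (-γ) := by
    rw [hIcc_img, Finset.sum_image (fun a _ b _ h => by omega)]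
    have hterm : ∀ i : ℕ, 8 * Real.exp (-γ * (((i+1:ℕ)):ℝ)) ≤
        8 * Real.exp (-γ) * (1/2)^i := by
      intro i
      push_cast
      have h1 : Real.exp (-γ * ((i:ℝ)+1)) = Real.exp (-γ) * Real.exp (-γ*i) := by
        rw [← Real.exp_add]; congr 1; ring
      have h2 : Real.exp (-γ*i) = (Real.exp (-γ))^i := by
        rw [← Real.exp_nat_mul]; congr 1; ring
      have h3 : Real.exp (-γ) ≤ 1/2 := by
        have he2 : (2:ℝ) ≤ Real.exp 2 := by
          have := Real.add_one_le_exp (2:ℝ)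
          linarith
        have h6 : Real.exp (-γ) ≤ (Real.exp 2)⁻¹ := by
          rw [← Real.exp_neg]
          exact Real.exp_le_exp.mpr (by linarith)
        calc Real.exp (-γ) ≤ (Real.exp 2)⁻¹ := h6
          _ ≤ 1/2 := by
            rw [one_div]
            exact inv_anti₀ (by norm_num) he2
      have h5 : (Real.exp (-γ))^i ≤ (1/2:ℝ)^i :=
        pow_le_pow_left₀ (Real.exp_pos _).le h3 i
      rw [h1, h2]
      nlinarith [mul_le_mul_of_nonneg_left h5 (by positivity : (0:ℝ) ≤ 8 * Real.exp (-γ))]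
    calc ∑ i ∈ Finset.range (N+1), 8 * Real.exp (-γ * (((i+1:ℕ)):ℝ))
        ≤ ∑ i ∈ Finset.range (N+1), 8 * Real.exp (-γ) * (1/2)^i :=
          Finset.sum_le_sum fun i _ => hterm i
      _ = 8 * Real.exp (-γ) * ∑ i ∈ Finset.range (N+1), (1/2:ℝ)^i := by
          rw [Finset.mul_sum]
      _ ≤ 8 * Real.exp (-γ) * 2 := by
          exact mul_le_mul_of_nonneg_left (sum_geometric_two_le _)
            (by positivity : (0:ℝ) ≤ 8 * Real.exp (-γ))
      _ = 16 * Real.exp (-γ) := by ring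
  -- final arithmetic
  set x : ℝ := c * Q₀^2 * |α| with hxdef
  set E : ℝ := Real.exp (-x) with hE
  set S : ℝ := ∑ m ∈ Finset.Icc 1 (N+1), 8 * Real.exp (-γ * m) with hSdef
  have hS0 : 0 ≤ S := Finset.sum_nonneg fun m _ => by positivity
  have hxpos : 0 < x := by rw [hx]; positivity
  have hE0 : 0 < E := Real.exp_pos _
  have hE1 : E ≤ 1 := Real.exp_le_one_iff.mpr (by linarith)
  have hγ2x : γ = 2 * x := by rw [hγ, hx]; ring
  have hexpγ : Real.exp (-γ) = E * E := by
    rw [hE, ← Real.exp_add, hγ2x]; congr 1; ring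
  have hSbound : S ≤ 16 * (E * E) := by rw [← hexpγ]; exact hgeo
  have hN1 : ((N:ℝ)+1) ≤ That*(-α) + 2 := by
    have h := Nat.ceil_lt_add_one (show (0:ℝ) ≤ That*(-α) by positivity)
    rw [hN]
    push_cast
    linarith
  have hxe : x * E ≤ 1 := by
    have h := Real.add_one_le_exp x
    rw [hE, Real.exp_neg]
    rw [mul_inv_le_iff₀ (Real.exp_pos x)]
    linarith
  set I : ℝ := (Q₀^2)⁻¹ with hI
  have hI0 : (0:ℝ) ≤ I := by positivity
  have hkey : (-α) * E ≤ 4608 * I := by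
    have hxeq : x = Q₀^2 * (-α) / 4608 := hx
    have h2 : Q₀^2 * (-α) / 4608 * E ≤ 1 := by rw [← hxeq]; exact hxe
    have h3 : Q₀^2 * ((-α) * E) ≤ 4608 := by nlinarith
    have h4 : (0:ℝ) < Q₀^2 := by positivity
    rw [hI]
    rw [← sub_nonneg]
    have : 4608 * (Q₀^2)⁻¹ - (-α) * E = (4608 - Q₀^2 * ((-α)*E)) * (Q₀^2)⁻¹ := by
      field_simp
    rw [this]
    exact mul_nonneg (by linarith) (by positivity)
  have hgoal : ((N:ℝ)+1) * S ≤ C * (1 + I) * E := by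
    have h1 : ((N:ℝ)+1)*S ≤ (That*(-α)+2)*(16*(E*E)) :=
      mul_le_mul hN1 hSbound hS0 (by positivity)
    have h3 : 16*That*((-α)*E)*E ≤ 16*That*(4608*I)*E := by
      have h := mul_le_mul_of_nonneg_left hkey (show (0:ℝ) ≤ 16*That by positivity)
      exact mul_le_mul_of_nonneg_right h hE0.le
    have h4 : 32*(E*E) ≤ 32*E := by nlinarith
    have h5 : ((N:ℝ)+1)*S ≤ 16*That*4608*I*E + 32*E := by nlinarith
    have h6 : 16*That*4608*I*E + 32*E ≤ C*(1+I)*E := by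
      rw [hC]
      nlinarith [mul_nonneg (show (0:ℝ) ≤ 73728*That + 35*I + 3 by positivity) hE0.le]
    linarith
  rw [hzpow]
  push_cast
  calc ((N:ℝ)+1) * S ≤ C * (1 + I) * E := hgoal
    _ = C * (1 + (Q₀^2)⁻¹) * Real.exp (-(c * Q₀ ^ 2 * |α|)) := by rw [hI, hE, hxdef]
end
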